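/- arXiv:0710.5338 — 6 statements merged into one kernel-verified Lean document; each statement's English description precedes it below -/
import Mathlib

section
/- Let an instance of the complete and strict 2-weighted popular matching problem with weights satisfying w1 ≥ 2·w2 be given. Then a matching M is a 2-weighted popular matching if and only if M is a well-formed matching. -/
open scoped Classical
open Finset

noncomputable section

/-- An instance of the complete and strict 2-weighted popular matching problem:
applicants `A` partitioned into categories `A1` (weight `w1`) and `A2` (weight `w2`),
items `I` with `|A| < |I|`, and for each applicant a strict complete preference list
encoded by an injective ranking function (smaller rank = more preferred). -/
structure TwoWPM (A I : Type) [Fintype A] [DecidableEq A] [Fintype I] [DecidableEq I] where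
  A1 : Finset A
  A2 : Finset A
  union_eq : A1 ∪ A2 = Finset.univ
  disj : Disjoint A1 A2
  w1 : ℝ
  w2 : ℝ
  hw12 : w2 < w1
  hw2 : 0 < w2
  rank : A → I → ℕ
  rank_inj : ∀ x : A, Function.Injective (rank x)
  card_lt : Fintype.card A < Fintype.card I

namespace TwoWPM

variable {A I : Type} [Fintype A] [DecidableEq A] [Fintype I] [DecidableEq I]
variable (P : TwoWPM A I)

/-- applicant `x` prefers item `p` to item `q`. -/
def Prefers (x : A) (p q : I) : Prop := P.rank x p < P.rank x q

/-- the most preferred item of applicant `x` within the set `s` (junk value if `s = ∅`). -/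
def bestIn (x : A) (s : Finset I) : I :=
  if hs : s.Nonempty then (Finset.exists_min_image s (P.rank x) hs).choose
  else (Fintype.card_pos_iff.mp (Nat.lt_of_le_of_lt (Nat.zero_le _) P.card_lt)).some

/-- the first item of an applicant of the first category. -/
def f1 (x : A) : I := P.bestIn x Finset.univ
/-- the set of `f1`-items. -/
def F1 : Finset I := P.A1.image P.f1
/-- the second item of an applicant of the first category. -/
def s1 (x : A) : I := P.bestIn x (Finset.univ \ P.F1)
/-- the set of `s1`-items. -/
def S1 : Finset I := P.A1.image P.s1
/-- the first item of an applicant of the second category. -/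
def f2 (y : A) : I := P.bestIn y (Finset.univ \ P.F1)
/-- the set of `f2`-items. -/
def F2 : Finset I := P.A2.image P.f2
/-- the second item of an applicant of the second category. -/
def s2 (y : A) : I := P.bestIn y (Finset.univ \ (P.F1 ∪ P.F2))
/-- the set of `s2`-items. -/
def S2 : Finset I := P.A2.image P.s2

/-- the weight of an applicant. -/
def weight (x : A) : ℝ := if x ∈ P.A1 then P.w1 else P.w2

/-- `M` is more popular than `M'`: the total weight of applicants preferring `M`
exceeds the total weight of applicants preferring `M'`. -/
def MorePopular (M M' : A → I) : Prop :=
  (∑ x : A, if P.Prefers x (M' x) (M x) then P.weight x else 0) <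
    ∑ x : A, if P.Prefers x (M x) (M' x) then P.weight x else 0

/-- `M` is a 2-weighted popular matching. -/
def IsPopular (M : A → I) : Prop :=
  Function.Injective M ∧ ∀ M' : A → I, Function.Injective M' → ¬ P.MorePopular M' M

/-- `M` is a well-formed matching. -/
def IsWellFormed (M : A → I) : Prop :=
  Function.Injective M ∧
  (∀ x ∈ P.A1, M x = P.f1 x ∨ M x = P.s1 x) ∧
  (∀ y ∈ P.A2, M y = P.f2 y ∨ M y = P.s2 y) ∧
  (∀ p ∈ P.F1, ∃ x ∈ P.A1, P.f1 x = p ∧ M x = p) ∧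
  (∀ q ∈ P.F2, ∃ y ∈ P.A2, P.f2 y = q ∧ M y = q)

/-- the instance has a 2-weighted popular matching. -/
def HasPopular : Prop := ∃ M : A → I, P.IsPopular M

/-- the instance has a well-formed matching. -/
def HasWellFormed : Prop := ∃ M : A → I, P.IsWellFormed M

/-- the `f`-endpoint of the fs-relation-graph edge associated with applicant `a`. -/
def fEnd (a : A) : I := if a ∈ P.A1 then P.f1 a else P.f2 a
/-- the `s`-endpoint of the fs-relation-graph edge associated with applicant `a`. -/
def sEnd (a : A) : I := if a ∈ P.A1 then P.s1 a else P.s2 a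

/-- the edge of applicant `a` joins items `p` and `q` in the fs-relation graph. -/
def EdgeJoins (a : A) (p q : I) : Prop :=
  (P.fEnd a = p ∧ P.sEnd a = q) ∨ (P.fEnd a = q ∧ P.sEnd a = p)

/-- adjacency in the fs-relation graph. -/
def Adj (p q : I) : Prop := ∃ a : A, P.EdgeJoins a p q

/-- a simple path in the fs-relation graph with `k` (distinct) vertices
`v 0, …, v (k-1)` and edges `e 0, …, e (k-2)`, edge `e i` joining `v i` and `v (i+1)`. -/
def IsPath (k : ℕ) (v : ℕ → I) (e : ℕ → A) : Prop :=
  (∀ i j, i < k → j < k → v i = v j → i = j) ∧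
  (∀ i, i + 1 < k → P.EdgeJoins (e i) (v i) (v (i + 1)))

/-- a simple cycle in the fs-relation graph with `ℓ ≥ 2` distinct vertices and
`ℓ` distinct edges. -/
def IsCycle (ℓ : ℕ) (u : ℕ → I) (c : ℕ → A) : Prop :=
  2 ≤ ℓ ∧
  (∀ i j, i < ℓ → j < ℓ → u i = u j → i = j) ∧
  (∀ i j, i < ℓ → j < ℓ → c i = c j → i = j) ∧
  (∀ i, i < ℓ → P.EdgeJoins (c i) (u i) (u ((i + 1) % ℓ)))

/-- a bad subgraph of type `G1`: a simple path on `k ≥ 4` vertices whose first and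
last edges belong to `E2`, whose second and second-to-last edges belong to `E1`,
and whose second and second-to-last vertices lie in `S1 ∩ F2`. -/
def HasBadG1 : Prop :=
  ∃ (k : ℕ) (v : ℕ → I) (e : ℕ → A),
    4 ≤ k ∧ P.IsPath k v e ∧
    e 0 ∈ P.A2 ∧ e 1 ∈ P.A1 ∧ e (k - 2) ∈ P.A2 ∧ e (k - 3) ∈ P.A1 ∧
    v 1 ∈ P.S1 ∧ v 1 ∈ P.F2 ∧ v (k - 2) ∈ P.S1 ∧ v (k - 2) ∈ P.F2

/-- a bad subgraph of type `G2`: a simple cycle together with a simple path on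
`k ≥ 3` vertices meeting the cycle exactly in its last vertex, whose first edge is
in `E2`, second edge in `E1`, and second vertex in `S1 ∩ F2`. -/
def HasBadG2 : Prop :=
  ∃ (ℓ : ℕ) (u : ℕ → I) (c : ℕ → A) (k : ℕ) (v : ℕ → I) (e : ℕ → A),
    P.IsCycle ℓ u c ∧ 3 ≤ k ∧ P.IsPath k v e ∧
    (∃ j, j < ℓ ∧ u j = v (k - 1)) ∧
    (∀ i, i < k - 1 → ∀ j, j < ℓ → v i ≠ u j) ∧
    e 0 ∈ P.A2 ∧ e 1 ∈ P.A1 ∧ v 1 ∈ P.S1 ∧ v 1 ∈ P.F2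

/-- a bad subgraph of type `G3`: two distinct cycles lying in the same connected
component of the fs-relation graph. -/
def HasBadG3 : Prop :=
  ∃ (ℓ : ℕ) (u : ℕ → I) (c : ℕ → A) (ℓ' : ℕ) (u' : ℕ → I) (c' : ℕ → A),
    P.IsCycle ℓ u c ∧ P.IsCycle ℓ' u' c' ∧
    {a : A | ∃ i, i < ℓ ∧ c i = a} ≠ {a : A | ∃ i, i < ℓ' ∧ c' i = a} ∧
    Relation.ReflTransGen P.Adj (u 0) (u' 0)

end TwoWPM

/-! If `M` is popular, a violation of well-formedness is turned into a more popular matching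
by promoting one applicant to a free item, swapping two applicants, or rotating the items of
three applicants. Hence if `a` envies `b` then `w a ≤ w b`, and if moreover `b` envies `c` then
`w a + w b ≤ w c`. So an envied `A1`-applicant holds its `f1`, and an envied holder of an item
outside `F1` is an `A2`-applicant holding its `f2`; the four conditions follow.

Conversely, let `M` be well-formed and `M'` arbitrary. Whoever prefers `M'` gets an item of
`F1 ∪ F2`, and its holder in `M` sits at its first choice and must move: holders of `F1`-items
are `A1`-applicants who lose, holders of `F2`-items are `A2`-applicants who lose or move up to
an `F1`-item. So every `A1`-loser pays for one `A1`-winner or for at most two `A2`-winners,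
which `w1 ≥ 2 w2` covers. -/

lemma Finset.card_le_card_of_forall_exists_eq {α β : Type*} [DecidableEq β] {f g : α → β}
    (hf : Function.Injective f) {s t : Finset α} (h : ∀ a ∈ s, ∃ b ∈ t, g b = f a) :
    #s ≤ #t :=
  calc #s = #(s.image f) := (card_image_of_injective s hf).symm
    _ ≤ #(t.image g) := card_le_card fun p hp => by
        obtain ⟨a, ha, rfl⟩ := mem_image.mp hp
        obtain ⟨b, hb, hba⟩ := h a ha
        exact mem_image.mpr ⟨b, hb, hba⟩
    _ ≤ #t := card_image_le

namespace TwoWPM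

variable {A I : Type} [Fintype A] [DecidableEq A] [Fintype I] [DecidableEq I]
variable (P : TwoWPM A I)

section Preferences

variable {P} {x : A} {p q : I} {s : Finset I}

lemma prefers_ne (h : P.Prefers x p q) : p ≠ q := ne_of_lt h ∘ congrArg (P.rank x)

lemma prefers_asymm (h : P.Prefers x p q) : ¬ P.Prefers x q p := lt_asymm h

lemma not_prefers_self : ¬ P.Prefers x p p := lt_irrefl _

lemma prefers_or_prefers (h : p ≠ q) : P.Prefers x p q ∨ P.Prefers x q p :=
  lt_or_gt_of_ne fun he => h (P.rank_inj x he)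

lemma bestIn_mem (hs : s.Nonempty) : P.bestIn x s ∈ s := by
  rw [bestIn, dif_pos hs]
  exact (s.exists_min_image (P.rank x) hs).choose_spec.1

lemma not_prefers_bestIn (hp : p ∈ s) : ¬ P.Prefers x p (P.bestIn x s) := by
  rw [bestIn, dif_pos ⟨p, hp⟩]
  exact not_lt.mpr ((s.exists_min_image (P.rank x) ⟨p, hp⟩).choose_spec.2 p hp)

lemma prefers_bestIn (hp : p ∈ s) (hne : p ≠ P.bestIn x s) : P.Prefers x (P.bestIn x s) p :=
  (prefers_or_prefers hne).resolve_left (not_prefers_bestIn hp)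

end Preferences

section Categories

lemma weight_pos (a : A) : 0 < P.weight a := by
  unfold weight; split_ifs
  exacts [P.hw2.trans P.hw12, P.hw2]

lemma weight_le_w1 (a : A) : P.weight a ≤ P.w1 := by
  unfold weight; split_ifs
  exacts [le_rfl, P.hw12.le]

lemma sum_weight (S : Finset A) :
    ∑ a ∈ S, P.weight a = P.w1 * #(S.filter (· ∈ P.A1)) + P.w2 * #(S.filter (· ∉ P.A1)) := by
  simp only [weight, sum_ite, sum_const, nsmul_eq_mul, mul_comm]

variable {P} {a : A}

lemma mem_A2_of_notMem_A1 (h : a ∉ P.A1) : a ∈ P.A2 := by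
  have : a ∈ P.A1 ∪ P.A2 := P.union_eq ▸ mem_univ a
  exact (mem_union.mp this).resolve_left h

lemma notMem_A1_of_mem_A2 (h : a ∈ P.A2) : a ∉ P.A1 :=
  fun h1 => disjoint_left.mp P.disj h1 h

lemma weight_of_mem_A1 (h : a ∈ P.A1) : P.weight a = P.w1 := if_pos h

lemma weight_of_notMem_A1 (h : a ∉ P.A1) : P.weight a = P.w2 := if_neg h

lemma sum_weight_of_forall_notMem_A1 {S : Finset A} (h : ∀ a ∈ S, a ∉ P.A1) :
    ∑ a ∈ S, P.weight a = P.w2 * #S := by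
  rw [sum_congr rfl fun a ha => weight_of_notMem_A1 (h a ha), sum_const, nsmul_eq_mul, mul_comm]

end Categories

section Choices

variable {P} {x : A} {p : I}

lemma card_F1_union_F2_lt : #(P.F1 ∪ P.F2) < Fintype.card I :=
  calc #(P.F1 ∪ P.F2) ≤ #P.A1 + #P.A2 :=
        (card_union_le _ _).trans (add_le_add card_image_le card_image_le)
    _ = Fintype.card A := by rw [← card_union_of_disjoint P.disj, P.union_eq, card_univ]
    _ < Fintype.card I := P.card_lt

lemma univ_sdiff_nonempty {s : Finset I} (hs : s ⊆ P.F1 ∪ P.F2) : (univ \ s).Nonempty := by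
  rw [← compl_eq_univ_sdiff, ← card_pos, card_compl]
  have := card_le_card hs
  have := P.card_F1_union_F2_lt
  omega

lemma f1_mem_F1 (hx : x ∈ P.A1) : P.f1 x ∈ P.F1 := mem_image_of_mem _ hx

lemma f2_mem_F2 (hx : x ∈ P.A2) : P.f2 x ∈ P.F2 := mem_image_of_mem _ hx

lemma not_prefers_f1 : ¬ P.Prefers x p (P.f1 x) := not_prefers_bestIn (mem_univ p)

lemma prefers_f1 (hp : p ≠ P.f1 x) : P.Prefers x (P.f1 x) p := prefers_bestIn (mem_univ p) hp

lemma s1_notMem_F1 : P.s1 x ∉ P.F1 :=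
  (mem_sdiff.mp (bestIn_mem (univ_sdiff_nonempty subset_union_left))).2

lemma mem_F1_of_prefers_s1 (h : P.Prefers x p (P.s1 x)) : p ∈ P.F1 := by
  by_contra hp
  exact not_prefers_bestIn (mem_sdiff.mpr ⟨mem_univ p, hp⟩) h

lemma prefers_s1 (hp : p ∉ P.F1) (hne : p ≠ P.s1 x) : P.Prefers x (P.s1 x) p :=
  prefers_bestIn (mem_sdiff.mpr ⟨mem_univ p, hp⟩) hne

lemma f2_notMem_F1 : P.f2 x ∉ P.F1 :=
  (mem_sdiff.mp (bestIn_mem (univ_sdiff_nonempty subset_union_left))).2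

lemma mem_F1_of_prefers_f2 (h : P.Prefers x p (P.f2 x)) : p ∈ P.F1 := by
  by_contra hp
  exact not_prefers_bestIn (mem_sdiff.mpr ⟨mem_univ p, hp⟩) h

lemma prefers_f2 (hp : p ∉ P.F1) (hne : p ≠ P.f2 x) : P.Prefers x (P.f2 x) p :=
  prefers_bestIn (mem_sdiff.mpr ⟨mem_univ p, hp⟩) hne

lemma s2_notMem_F1_union_F2 : P.s2 x ∉ P.F1 ∪ P.F2 :=
  (mem_sdiff.mp (bestIn_mem (univ_sdiff_nonempty subset_rfl))).2

lemma mem_F1_union_F2_of_prefers_s2 (h : P.Prefers x p (P.s2 x)) : p ∈ P.F1 ∪ P.F2 := by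
  by_contra hp
  exact not_prefers_bestIn (mem_sdiff.mpr ⟨mem_univ p, hp⟩) h

lemma prefers_s2 (hp : p ∉ P.F1 ∪ P.F2) (hne : p ≠ P.s2 x) : P.Prefers x (P.s2 x) p :=
  prefers_bestIn (mem_sdiff.mpr ⟨mem_univ p, hp⟩) hne

end Choices

def preferring (M M' : A → I) : Finset A := univ.filter fun a => P.Prefers a (M a) (M' a)

section Comparison

variable {P} {M M' : A → I}

lemma morePopular_iff :
    P.MorePopular M M' ↔
      ∑ a ∈ P.preferring M' M, P.weight a < ∑ a ∈ P.preferring M M', P.weight a := by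
  simp only [MorePopular, preferring, sum_filter]

lemma morePopular_of_sum_weight_lt (G L : Finset A)
    (hG : ∀ a ∈ G, P.Prefers a (M' a) (M a)) (hrest : ∀ a, a ∉ G → a ∉ L → M' a = M a)
    (hw : ∑ a ∈ L, P.weight a < ∑ a ∈ G, P.weight a) : P.MorePopular M' M := by
  have hloss : P.preferring M M' ⊆ L := by
    intro a ha
    have ha : P.Prefers a (M a) (M' a) := (mem_filter.mp ha).2
    by_contra haL
    by_cases haG : a ∈ G
    · exact prefers_asymm (hG a haG) ha
    · exact not_prefers_self (hrest a haG haL ▸ ha)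
  have hgain : G ⊆ P.preferring M' M := fun a ha => mem_filter.mpr ⟨mem_univ a, hG a ha⟩
  rw [morePopular_iff]
  calc ∑ a ∈ P.preferring M M', P.weight a ≤ ∑ a ∈ L, P.weight a :=
        sum_le_sum_of_subset_of_nonneg hloss fun a _ _ => (P.weight_pos a).le
    _ < ∑ a ∈ G, P.weight a := hw
    _ ≤ ∑ a ∈ P.preferring M' M, P.weight a :=
        sum_le_sum_of_subset_of_nonneg hgain fun a _ _ => (P.weight_pos a).le

end Comparison

section Popular

variable {P} {M : A → I} {a b c : A}

lemma IsPopular.exists_eq_of_prefers (hM : P.IsPopular M) {t : I} (h : P.Prefers a t (M a)) :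
    ∃ b, M b = t := by
  by_contra! hfree
  have hinj : Function.Injective (Function.update M a t) := by
    intro b c hbc
    by_cases hb : b = a <;> by_cases hc : c = a <;>
      simp_all [Function.update_of_ne, hM.1.eq_iff]
  refine hM.2 _ hinj (morePopular_of_sum_weight_lt {a} ∅ ?_ ?_ ?_)
  · simpa using h
  · intro b hb _
    exact Function.update_of_ne (by simpa using hb) _ _
  · simpa using P.weight_pos a

lemma IsPopular.not_prefers_of_prefers (hM : P.IsPopular M) (h : P.Prefers a (M b) (M a)) :
    ¬ P.Prefers b (M a) (M b) := by
  intro h'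
  have hab : a ≠ b := fun e => prefers_ne h (by rw [e])
  refine hM.2 _ (hM.1.comp (Equiv.swap a b).injective)
    (morePopular_of_sum_weight_lt {a, b} ∅ ?_ ?_ ?_)
  · simpa [Equiv.swap_apply_left, Equiv.swap_apply_right] using ⟨h, h'⟩
  · intro c hc _
    simp only [mem_insert, mem_singleton, not_or] at hc
    simp [Equiv.swap_apply_of_ne_of_ne hc.1 hc.2]
  · simpa [sum_pair hab] using add_pos (P.weight_pos a) (P.weight_pos b)

lemma IsPopular.weight_le_of_prefers (hM : P.IsPopular M) (h : P.Prefers a (M b) (M a)) :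
    P.weight a ≤ P.weight b := by
  by_contra! hlt
  have hab : a ≠ b := fun e => prefers_ne h (by rw [e])
  refine hM.2 _ (hM.1.comp (Equiv.swap a b).injective)
    (morePopular_of_sum_weight_lt {a} {b} ?_ ?_ ?_)
  · simpa [Equiv.swap_apply_left] using h
  · intro c hc hc'
    simp only [mem_singleton] at hc hc'
    simp [Equiv.swap_apply_of_ne_of_ne hc hc']
  · simpa using hlt

lemma IsPopular.weight_add_le_of_prefers (hM : P.IsPopular M) (hab : P.Prefers a (M b) (M a))
    (hbc : P.Prefers b (M c) (M b)) : P.weight a + P.weight b ≤ P.weight c := by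
  by_cases hca : c = a
  · subst hca
    exact absurd hbc (hM.not_prefers_of_prefers hab)
  by_contra! hlt
  have hab' : a ≠ b := fun e => prefers_ne hab (by rw [e])
  have hbc' : b ≠ c := fun e => prefers_ne hbc (by rw [e])
  -- `a`, `b`, `c` take the items of `b`, `c`, `a`
  refine hM.2 _ (hM.1.comp (Equiv.swap a b * Equiv.swap b c).injective)
    (morePopular_of_sum_weight_lt {a, b} {c} ?_ ?_ ?_)
  · simp only [mem_insert, mem_singleton, forall_eq_or_imp, forall_eq, Function.comp_apply,
      Equiv.Perm.mul_apply, Equiv.swap_apply_of_ne_of_ne hab' (Ne.symm hca),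
      Equiv.swap_apply_left, Equiv.swap_apply_of_ne_of_ne hca hbc'.symm]
    exact ⟨hab, hbc⟩
  · intro d hd hd'
    simp only [mem_insert, mem_singleton, not_or] at hd hd'
    simp [Equiv.swap_apply_of_ne_of_ne hd.2 hd', Equiv.swap_apply_of_ne_of_ne hd.1 hd.2]
  · simpa [sum_pair hab'] using hlt

lemma IsPopular.eq_f1_of_prefers (hM : P.IsPopular M) (h : P.Prefers a (M b) (M a))
    (hb : b ∈ P.A1) : M b = P.f1 b := by
  by_contra hne
  obtain ⟨c, hc⟩ := hM.exists_eq_of_prefers (prefers_f1 hne)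
  have := hM.weight_add_le_of_prefers h (hc ▸ prefers_f1 hne)
  rw [weight_of_mem_A1 hb] at this
  linarith [P.weight_pos a, P.weight_le_w1 c]

lemma IsPopular.mem_A1_of_prefers (hM : P.IsPopular M) (ha : a ∈ P.A1)
    (h : P.Prefers a (M b) (M a)) : b ∈ P.A1 := by
  by_contra hb
  have := hM.weight_le_of_prefers h
  rw [weight_of_mem_A1 ha, weight_of_notMem_A1 hb] at this
  exact this.not_gt P.hw12

lemma IsPopular.mem_A2_and_eq_f2_of_prefers (hM : P.IsPopular M) (h : P.Prefers a (M b) (M a))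
    (hb : M b ∉ P.F1) : b ∈ P.A2 ∧ M b = P.f2 b := by
  have hbA1 : b ∉ P.A1 := fun hb1 => hb (hM.eq_f1_of_prefers h hb1 ▸ f1_mem_F1 hb1)
  refine ⟨mem_A2_of_notMem_A1 hbA1, ?_⟩
  by_contra hne
  obtain ⟨c, hc⟩ := hM.exists_eq_of_prefers (prefers_f2 hb hne)
  have hbc : P.Prefers b (M c) (M b) := hc ▸ prefers_f2 hb hne
  have hcA1 : c ∉ P.A1 := fun hc1 =>
    f2_notMem_F1 (hc ▸ hM.eq_f1_of_prefers hbc hc1 ▸ f1_mem_F1 hc1)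
  have := hM.weight_add_le_of_prefers h hbc
  rw [weight_of_notMem_A1 hbA1, weight_of_notMem_A1 hcA1] at this
  linarith [P.weight_pos a]

lemma IsPopular.exists_f1_eq (hM : P.IsPopular M) {p : I} (hp : p ∈ P.F1) :
    ∃ x ∈ P.A1, P.f1 x = p ∧ M x = p := by
  rw [F1, mem_image] at hp
  obtain ⟨x, hx, rfl⟩ := hp
  by_cases hMx : M x = P.f1 x
  · exact ⟨x, hx, rfl, hMx⟩
  obtain ⟨z, hz⟩ := hM.exists_eq_of_prefers (prefers_f1 hMx)
  have h : P.Prefers x (M z) (M x) := hz ▸ prefers_f1 hMx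
  have hzA1 := hM.mem_A1_of_prefers hx h
  exact ⟨z, hzA1, (hM.eq_f1_of_prefers h hzA1).symm.trans hz, hz⟩

lemma IsPopular.mem_A1_and_eq_f1_of_mem_F1 (hM : P.IsPopular M) (h : M a ∈ P.F1) :
    a ∈ P.A1 ∧ M a = P.f1 a := by
  obtain ⟨x, hx, hfx, hMx⟩ := hM.exists_f1_eq h
  obtain rfl := hM.1 hMx
  exact ⟨hx, hfx.symm⟩

lemma IsPopular.exists_f2_eq (hM : P.IsPopular M) {q : I} (hq : q ∈ P.F2) :
    ∃ y ∈ P.A2, P.f2 y = q ∧ M y = q := by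
  rw [F2, mem_image] at hq
  obtain ⟨y, hy, rfl⟩ := hq
  by_cases hMy : M y = P.f2 y
  · exact ⟨y, hy, rfl, hMy⟩
  have hF1 : M y ∉ P.F1 := fun h =>
    notMem_A1_of_mem_A2 hy (hM.mem_A1_and_eq_f1_of_mem_F1 h).1
  obtain ⟨z, hz⟩ := hM.exists_eq_of_prefers (prefers_f2 hF1 hMy)
  obtain ⟨hzA2, hzf⟩ :=
    hM.mem_A2_and_eq_f2_of_prefers (hz ▸ prefers_f2 hF1 hMy) (hz ▸ f2_notMem_F1)
  exact ⟨z, hzA2, hzf.symm.trans hz, hz⟩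

lemma IsPopular.eq_f1_or_eq_s1 (hM : P.IsPopular M) (ha : a ∈ P.A1) :
    M a = P.f1 a ∨ M a = P.s1 a := by
  by_contra! ⟨hf, hs⟩
  have hF1 : M a ∉ P.F1 := fun h => hf (hM.mem_A1_and_eq_f1_of_mem_F1 h).2
  obtain ⟨z, hz⟩ := hM.exists_eq_of_prefers (prefers_s1 hF1 hs)
  have h : P.Prefers a (M z) (M a) := hz ▸ prefers_s1 hF1 hs
  exact notMem_A1_of_mem_A2 (hM.mem_A2_and_eq_f2_of_prefers h (hz ▸ s1_notMem_F1)).1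
    (hM.mem_A1_of_prefers ha h)

lemma IsPopular.eq_f2_or_eq_s2 (hM : P.IsPopular M) (ha : a ∈ P.A2) :
    M a = P.f2 a ∨ M a = P.s2 a := by
  by_contra! ⟨hf, hs⟩
  have hF12 : M a ∉ P.F1 ∪ P.F2 := by
    rw [mem_union, not_or]
    refine ⟨fun h => notMem_A1_of_mem_A2 ha (hM.mem_A1_and_eq_f1_of_mem_F1 h).1, fun h => ?_⟩
    obtain ⟨y, -, hfy, hMy⟩ := hM.exists_f2_eq h
    obtain rfl := hM.1 hMy
    exact hf hfy.symm
  obtain ⟨z, hz⟩ := hM.exists_eq_of_prefers (prefers_s2 hF12 hs)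
  have hs2 : M z ∉ P.F1 ∪ P.F2 := hz ▸ s2_notMem_F1_union_F2
  obtain ⟨hzA2, hzf⟩ := hM.mem_A2_and_eq_f2_of_prefers (hz ▸ prefers_s2 hF12 hs)
    (fun h => hs2 (mem_union_left _ h))
  exact hs2 (mem_union_right _ (hzf ▸ f2_mem_F2 hzA2))

lemma IsPopular.isWellFormed (hM : P.IsPopular M) : P.IsWellFormed M :=
  ⟨hM.1, fun _ => hM.eq_f1_or_eq_s1, fun _ => hM.eq_f2_or_eq_s2, fun _ => hM.exists_f1_eq,
    fun _ => hM.exists_f2_eq⟩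

end Popular

section WellFormed

variable {P} {M M' : A → I} {a : A} {p : I}

lemma IsWellFormed.mem_F1_of_prefers (hM : P.IsWellFormed M) (ha : a ∈ P.A1)
    (h : P.Prefers a p (M a)) : p ∈ P.F1 := by
  rcases hM.2.1 a ha with hf | hs
  · exact absurd (hf ▸ h) not_prefers_f1
  · exact mem_F1_of_prefers_s1 (hs ▸ h)

lemma IsWellFormed.mem_F1_union_F2_of_prefers (hM : P.IsWellFormed M)
    (h : P.Prefers a p (M a)) : p ∈ P.F1 ∪ P.F2 := by
  by_cases ha : a ∈ P.A1
  · exact mem_union_left _ (hM.mem_F1_of_prefers ha h)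
  rcases hM.2.2.1 a (mem_A2_of_notMem_A1 ha) with hf | hs
  · exact mem_union_left _ (mem_F1_of_prefers_f2 (hf ▸ h))
  · exact mem_F1_union_F2_of_prefers_s2 (hs ▸ h)

lemma ne_of_mem_preferring (hM' : Function.Injective M') (ha : a ∈ P.preferring M' M) {x : A}
    (hx : M x = M' a) : M' x ≠ M x := by
  intro h
  obtain rfl := hM' (h.trans hx)
  exact prefers_ne (mem_filter.mp ha).2 hx.symm

lemma IsWellFormed.card_filter_mem_F1_le (hM : P.IsWellFormed M)
    (hM' : Function.Injective M') :
    #((P.preferring M' M).filter (M' · ∈ P.F1)) ≤ #((P.preferring M M').filter (· ∈ P.A1)) := by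
  refine card_le_card_of_forall_exists_eq (g := M) hM' fun a ha => ?_
  obtain ⟨ha, hF1⟩ := mem_filter.mp ha
  obtain ⟨x, hx, hfx, hMx⟩ := hM.2.2.2.1 _ hF1
  have hMf : M x = P.f1 x := hMx.trans hfx.symm
  have hloses : P.Prefers x (M x) (M' x) :=
    hMf ▸ prefers_f1 (hMf ▸ ne_of_mem_preferring hM' ha hMx)
  exact ⟨x, mem_filter.mpr ⟨mem_filter.mpr ⟨mem_univ x, hloses⟩, hx⟩, hMx⟩

lemma IsWellFormed.card_filter_notMem_F1_le (hM : P.IsWellFormed M)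
    (hM' : Function.Injective M') :
    #((P.preferring M' M).filter (M' · ∉ P.F1)) ≤
      #((P.preferring M M').filter (· ∉ P.A1)) +
        #(((P.preferring M' M).filter (M' · ∈ P.F1)).filter (· ∉ P.A1)) := by
  refine (card_le_card_of_forall_exists_eq (g := M) hM' fun a ha => ?_).trans (card_union_le _ _)
  obtain ⟨ha, hF1⟩ := mem_filter.mp ha
  have hF2 : M' a ∈ P.F2 :=
    (mem_union.mp (hM.mem_F1_union_F2_of_prefers (mem_filter.mp ha).2)).resolve_left hF1
  obtain ⟨y, hy, hfy, hMy⟩ := hM.2.2.2.2 _ hF2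
  have hMf : M y = P.f2 y := hMy.trans hfy.symm
  refine ⟨y, ?_, hMy⟩
  simp only [preferring, mem_union, mem_filter, mem_univ, true_and]
  rcases prefers_or_prefers (x := y) (ne_of_mem_preferring hM' ha hMy) with hwins | hloses
  · exact Or.inr ⟨⟨hwins, mem_F1_of_prefers_f2 (hMf ▸ hwins)⟩, notMem_A1_of_mem_A2 hy⟩
  · exact Or.inl ⟨hloses, notMem_A1_of_mem_A2 hy⟩

lemma IsWellFormed.isPopular (hw : 2 * P.w2 ≤ P.w1) (hM : P.IsWellFormed M) :
    P.IsPopular M := by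
  refine ⟨hM.1, fun M' hM' hmore => ?_⟩
  have hB2 : ∀ a ∈ (P.preferring M' M).filter (M' · ∉ P.F1), a ∉ P.A1 := fun a ha haA1 =>
    (mem_filter.mp ha).2 (hM.mem_F1_of_prefers haA1 (mem_filter.mp (mem_filter.mp ha).1).2)
  have hcard1 := hM.card_filter_mem_F1_le hM'
  have hcard2 := hM.card_filter_notMem_F1_le hM'
  rw [morePopular_iff, ← sum_filter_add_sum_filter_not (P.preferring M' M) (M' · ∈ P.F1),
    P.sum_weight (P.preferring M M'), P.sum_weight ((P.preferring M' M).filter _),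
    sum_weight_of_forall_notMem_A1 hB2] at hmore
  rw [← card_filter_add_card_filter_not (· ∈ P.A1)] at hcard1
  set B1 := (P.preferring M' M).filter (M' · ∈ P.F1)
  have hw1 : 0 ≤ P.w1 := (P.hw2.trans P.hw12).le
  have := mul_le_mul_of_nonneg_left (Nat.cast_le.mpr hcard1 : (_ : ℝ) ≤ _) hw1
  have := mul_le_mul_of_nonneg_left (Nat.cast_le.mpr hcard2 : (_ : ℝ) ≤ _) P.hw2.le
  have := mul_le_mul_of_nonneg_right hw (Nat.cast_nonneg #(B1.filter (· ∉ P.A1)) : (0 : ℝ) ≤ _)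
  push_cast at *
  linarith

end WellFormed

end TwoWPM

/-- For an instance of the complete and strict 2-weighted popular
matching problem with `w1 ≥ 2 w2`, a matching `M` is a 2-weighted popular matching
if and only if `M` is a well-formed matching. -/
theorem popular_iff_well_formed
    {A I : Type} [Fintype A] [DecidableEq A] [Fintype I] [DecidableEq I]
    (P : TwoWPM A I) (hw : 2 * P.w2 ≤ P.w1) (M : A → I) :
    P.IsPopular M ↔ P.IsWellFormed M :=
  ⟨TwoWPM.IsPopular.isWellFormed, TwoWPM.IsWellFormed.isPopular hw⟩
end
end

section
/- If the fs-relation graph of an instance of the complete and strict 2-weighted popular matching problem contains a bad subgraph of type G1, then the instance has no well-formed matching. -/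
open scoped Classical
open Finset

noncomputable section

/-!
In a well-formed matching every applicant gets an endpoint of its own edge, and every item of
`F2` goes to an applicant of `A2`. So the `E1`-edge `v 1 v 2` of a bad path cannot take `v 1`
and takes `v 2`; by injectivity each following edge is then forced to take its far endpoint,
until the `E1`-edge `v (k-3) v (k-2)` takes the `F2`-item `v (k-2)`, a contradiction.
-/

namespace TwoWPM

variable {A I : Type} [Fintype A] [DecidableEq A] [Fintype I] [DecidableEq I]
  {P : TwoWPM A I} {M : A → I}

theorem EdgeJoins.eq_of_edgeJoins {a : A} {p q r : I} (hpq : P.EdgeJoins a p q)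
    (hqr : P.EdgeJoins a q r) : p = r := by
  unfold EdgeJoins at hpq hqr
  grind

theorem IsWellFormed.apply_eq_fEnd_or_sEnd (hM : P.IsWellFormed M) (a : A) :
    M a = P.fEnd a ∨ M a = P.sEnd a := by
  by_cases ha : a ∈ P.A1
  · simpa [fEnd, sEnd, ha] using hM.2.1 a ha
  · have ha2 : a ∈ P.A2 :=
      (Finset.mem_union.mp (P.union_eq.symm ▸ Finset.mem_univ a)).resolve_left ha
    simpa [fEnd, sEnd, ha] using hM.2.2.1 a ha2

theorem apply_eq_or_eq_of_edgeJoins (hM : ∀ a, M a = P.fEnd a ∨ M a = P.sEnd a) {a : A}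
    {p q : I} (hpq : P.EdgeJoins a p q) : M a = p ∨ M a = q := by
  unfold EdgeJoins at hpq
  grind

theorem IsWellFormed.apply_ne_of_mem_A1_of_mem_F2 (hM : P.IsWellFormed M) {a : A} (ha : a ∈ P.A1)
    {q : I} (hq : q ∈ P.F2) : M a ≠ q := by
  rintro rfl
  obtain ⟨y, hy, -, hMy⟩ := hM.2.2.2.2 _ hq
  obtain rfl : y = a := hM.1 hMy
  exact Finset.disjoint_left.mp P.disj ha hy

theorem IsPath.apply_eq_succ_of_apply_eq_succ (hinj : Function.Injective M)
    (hM : ∀ a, M a = P.fEnd a ∨ M a = P.sEnd a) {k : ℕ} {v : ℕ → I} {e : ℕ → A}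
    (hpath : P.IsPath k v e) {i : ℕ} (hi : M (e i) = v (i + 1)) :
    ∀ j, i ≤ j → j + 1 < k → M (e j) = v (j + 1) := by
  intro j hij hjk
  induction j, hij using Nat.le_induction with
  | base => exact hi
  | succ j hij ih =>
    refine (apply_eq_or_eq_of_edgeJoins hM (hpath.2 (j + 1) hjk)).resolve_left fun hback => ?_
    have hsame : e (j + 1) = e j := hinj (hback.trans (ih (by omega)).symm)
    have hvj := (hpath.2 j (by omega)).eq_of_edgeJoins (hsame ▸ hpath.2 (j + 1) hjk)
    have := hpath.1 j (j + 2) (by omega) hjk hvj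
    omega

end TwoWPM

/-- If the fs-relation graph contains a bad subgraph of type `G1`,
then the instance has no well-formed matching. -/
theorem no_well_formed_of_badG1
    {A I : Type} [Fintype A] [DecidableEq A] [Fintype I] [DecidableEq I]
    (P : TwoWPM A I) (h : P.HasBadG1) :
    ¬ P.HasWellFormed := by
  rintro ⟨M, hM⟩
  obtain ⟨k, v, e, hk, hpath, -, he1, -, he3, -, hv1, -, hv2⟩ := h
  have hend := hM.apply_eq_fEnd_or_sEnd
  have hfirst : M (e 1) = v 2 :=
    (TwoWPM.apply_eq_or_eq_of_edgeJoins hend (hpath.2 1 (by omega))).resolve_left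
      (hM.apply_ne_of_mem_A1_of_mem_F2 he1 hv1)
  have hlast := hpath.apply_eq_succ_of_apply_eq_succ hM.1 hend hfirst (k - 3) (by omega)
    (by omega)
  rw [show k - 3 + 1 = k - 2 by omega] at hlast
  exact hM.apply_ne_of_mem_A1_of_mem_F2 he3 hv2 hlast
end
end

section
/- If the fs-relation graph of an instance of the complete and strict 2-weighted popular matching problem contains a bad subgraph of type G2, then the instance has no well-formed matching. -/
open scoped Classical
open Finset

noncomputable section

/-!
In a well-formed matching every applicant is matched to an endpoint of its own edge of the
fs-relation graph. An injective such assignment must use every vertex of a cycle for the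
cycle's own edges, as a cycle has as many edges as vertices. Hence the end vertex of the
pendant path is taken by a cycle edge, which pushes every path edge onto its endpoint away
from the cycle. In particular the `E1`-edge `e 1` is matched to `v 1 ∈ F2`; but
well-formedness reserves every item of `F2` for an applicant of `A2`.
-/

namespace TwoWPM

variable {A I : Type} [Fintype A] [DecidableEq A] [Fintype I] [DecidableEq I]
variable {P : TwoWPM A I}

def SelectsEndpoints (P : TwoWPM A I) (M : A → I) : Prop :=
  ∀ a, M a = P.fEnd a ∨ M a = P.sEnd a

lemma IsWellFormed.selectsEndpoints {M : A → I} (hM : P.IsWellFormed M) :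
    P.SelectsEndpoints M := by
  obtain ⟨-, h1, h2, -, -⟩ := hM
  intro a
  by_cases ha : a ∈ P.A1
  · simpa only [fEnd, sEnd, if_pos ha] using h1 a ha
  · have ha2 : a ∈ P.A2 := by
      simpa [ha] using (P.union_eq ▸ Finset.mem_univ a : a ∈ P.A1 ∪ P.A2)
    simpa only [fEnd, sEnd, if_neg ha] using h2 a ha2

lemma IsWellFormed.mem_A2_of_apply_mem_F2 {M : A → I} (hM : P.IsWellFormed M) {a : A}
    (ha : M a ∈ P.F2) : a ∈ P.A2 := by
  obtain ⟨y, hy, -, hMy⟩ := hM.2.2.2.2 (M a) ha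
  exact hM.1 hMy ▸ hy

lemma EdgeJoins.eq_or_eq_of_edgeJoins {a : A} {p q p' q' : I} (h : P.EdgeJoins a p q)
    (h' : P.EdgeJoins a p' q') : p = p' ∨ p = q' := by
  unfold EdgeJoins at h h'
  grind

namespace SelectsEndpoints

variable {M : A → I}

lemma apply_eq_or_eq (hM : P.SelectsEndpoints M) {a : A} {p q : I}
    (h : P.EdgeJoins a p q) : M a = p ∨ M a = q := by
  unfold EdgeJoins at h
  grind [SelectsEndpoints]

lemma apply_eq_of_apply_eq (hM : P.SelectsEndpoints M) (hinj : Function.Injective M)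
    {a b : A} {p q : I} (h : P.EdgeJoins a p q) (hb : M b = q) (hab : a ≠ b) : M a = p :=
  (hM.apply_eq_or_eq h).resolve_right fun ha => hab (hinj (ha.trans hb.symm))

lemma exists_cycle_edge_apply_eq (hM : P.SelectsEndpoints M) (hinj : Function.Injective M)
    {ℓ : ℕ} {u : ℕ → I} {c : ℕ → A} (hc : P.IsCycle ℓ u c) {j : ℕ} (hj : j < ℓ) :
    ∃ i < ℓ, M (c i) = u j := by
  obtain ⟨hℓ, -, hcinj, hedge⟩ := hc
  have hsub : (range ℓ).image (M ∘ c) ⊆ (range ℓ).image u := by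
    intro p hp
    obtain ⟨i, hi, rfl⟩ := mem_image.mp hp
    have hi : i < ℓ := mem_range.mp hi
    rcases hM.apply_eq_or_eq (hedge i hi) with h | h
    · exact mem_image.mpr ⟨i, mem_range.mpr hi, h.symm⟩
    · exact mem_image.mpr ⟨_, mem_range.mpr (Nat.mod_lt _ (by omega)), h.symm⟩
  have hcard : ((range ℓ).image u).card ≤ ((range ℓ).image (M ∘ c)).card := by
    rw [card_image_of_injOn (f := M ∘ c) fun i hi i' hi' h => hcinj i i' (mem_range.mp hi)
      (mem_range.mp hi') (hinj h), card_range]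
    exact card_image_le.trans (card_range ℓ).le
  have hu : u j ∈ (range ℓ).image (M ∘ c) :=
    eq_of_subset_of_card_le hsub hcard ▸ mem_image_of_mem u (mem_range.mpr hj)
  obtain ⟨i, hi, hMi⟩ := mem_image.mp hu
  exact ⟨i, mem_range.mp hi, hMi⟩

lemma path_apply_eq_of_succ (hM : P.SelectsEndpoints M) (hinj : Function.Injective M)
    {k : ℕ} {v : ℕ → I} {e : ℕ → A} (hp : P.IsPath k v e) {i : ℕ} (hi : i + 2 < k)
    (hsucc : M (e (i + 1)) = v (i + 1)) : M (e i) = v i := by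
  obtain ⟨hvinj, hedge⟩ := hp
  refine hM.apply_eq_of_apply_eq hinj (hedge i (by omega)) hsucc fun he => ?_
  have h' := hedge (i + 1) hi
  rw [← he] at h'
  rcases (hedge i (by omega)).eq_or_eq_of_edgeJoins h' with h | h
  · exact absurd (hvinj _ _ (by omega) (by omega) h) (by omega)
  · exact absurd (hvinj _ _ (by omega) hi h) (by omega)

lemma path_apply_eq_of_le (hM : P.SelectsEndpoints M) (hinj : Function.Injective M)
    {k : ℕ} {v : ℕ → I} {e : ℕ → A} (hp : P.IsPath k v e) {i m : ℕ} (him : i ≤ m)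
    (hm : m + 1 < k) (hMm : M (e m) = v m) : M (e i) = v i := by
  induction m, him using Nat.le_induction with
  | base => exact hMm
  | succ m _ ih => exact ih (by omega) (hM.path_apply_eq_of_succ hinj hp hm hMm)

end SelectsEndpoints

end TwoWPM

/-- If the fs-relation graph contains a bad subgraph of type `G2`,
then the instance has no well-formed matching. -/
theorem no_well_formed_of_badG2
    {A I : Type} [Fintype A] [DecidableEq A] [Fintype I] [DecidableEq I]
    (P : TwoWPM A I) (h : P.HasBadG2) :
    ¬ P.HasWellFormed := by
  rintro ⟨M, hM⟩
  obtain ⟨ℓ, u, c, k, v, e, hcyc, hk, hpath, ⟨j, hj, hju⟩, hoff, -, he1, -, hv1⟩ := h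
  have hsel := hM.selectsEndpoints
  obtain ⟨i₀, hi₀, hci₀⟩ := hsel.exists_cycle_edge_apply_eq hM.1 hcyc hj
  have hlast : P.EdgeJoins (e (k - 2)) (v (k - 2)) (v (k - 1)) := by
    simpa only [show k - 2 + 1 = k - 1 by omega] using hpath.2 (k - 2) (by omega)
  have hMlast : M (e (k - 2)) = v (k - 2) := by
    refine hsel.apply_eq_of_apply_eq hM.1 hlast (hci₀.trans hju) fun he => ?_
    rcases hlast.eq_or_eq_of_edgeJoins (he ▸ hcyc.2.2.2 i₀ hi₀) with h | h
    · exact hoff (k - 2) (by omega) i₀ hi₀ h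
    · exact hoff (k - 2) (by omega) _ (Nat.mod_lt _ (by omega)) h
  have hMe1 : M (e 1) = v 1 :=
    hsel.path_apply_eq_of_le hM.1 hpath (by omega) (by omega) hMlast
  exact disjoint_left.mp P.disj he1 (hM.mem_A2_of_apply_mem_F2 (hMe1 ▸ hv1))
end
end

section
/- If the fs-relation graph of an instance of the complete and strict 2-weighted popular matching problem contains a bad subgraph of type G3 (i.e., some connected component contains two distinct cycles), then the instance has no well-formed matching. -/
open scoped Classical
open Finset

noncomputable section

/-!
A well-formed matching sends every applicant to an endpoint of its edge, injectively, so a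
vertex set of the fs-relation graph spans at most as many edges as it has vertices. A connected
component containing two distinct cycles spans more: pick an edge `b` of the second cycle that is
not on the first. Since `b` lies on a cycle, deleting it keeps the component connected; charging
each vertex `u i` of the first cycle to the cycle edge `c i`, and every other vertex to the first
edge of a shortest path to the first cycle avoiding `b`, injects the vertices into the edges
other than `b`.
-/

open Relation

def ReachesIn {α : Type*} (r : α → α → Prop) (C : α → Prop) : ℕ → α → Prop
  | 0, p => C p
  | n + 1, p => ∃ q, r p q ∧ ReachesIn r C n q

/-- The length of a shortest `r`-walk from `p` into `C` (junk value `0` if there is none). -/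
def distTo {α : Type*} (r : α → α → Prop) (C : α → Prop) (p : α) : ℕ :=
  sInf {n | ReachesIn r C n p}

section Reach

variable {α : Type*} {r : α → α → Prop} {C : α → Prop} {p : α}

theorem ReachesIn.exists_of_reflTransGen {q : α} (h : ReflTransGen r p q) (hq : C q) :
    ∃ n, ReachesIn r C n p := by
  induction h using ReflTransGen.head_induction_on with
  | refl => exact ⟨0, hq⟩
  | head hpq _ ih =>
    obtain ⟨n, hn⟩ := ih
    exact ⟨n + 1, _, hpq, hn⟩

theorem distTo_eq_zero (hp : C p) : distTo r C p = 0 :=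
  Nat.eq_zero_of_le_zero (Nat.sInf_le (s := {n | ReachesIn r C n p}) hp)

theorem exists_rel_distTo_lt (h : ∃ n, ReachesIn r C n p) (hp : ¬ C p) :
    ∃ q, r p q ∧ distTo r C q < distTo r C p := by
  have hmem : ReachesIn r C (distTo r C p) p := Nat.sInf_mem h
  obtain ⟨k, hk⟩ : ∃ k, distTo r C p = k + 1 :=
    Nat.exists_eq_succ_of_ne_zero fun h0 => hp (by rw [h0] at hmem; exact hmem)
  rw [hk] at hmem ⊢
  obtain ⟨q, hpq, hq⟩ := hmem
  exact ⟨q, hpq, Nat.lt_succ_of_le (Nat.sInf_le hq)⟩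

end Reach

namespace TwoWPM

variable {A I : Type} [Fintype A] [DecidableEq A] [Fintype I] [DecidableEq I] {P : TwoWPM A I}

theorem IsWellFormed.eq_fEnd_or_eq_sEnd {M : A → I} (hM : P.IsWellFormed M) (a : A) :
    M a = P.fEnd a ∨ M a = P.sEnd a := by
  by_cases ha : a ∈ P.A1
  · simpa only [fEnd, sEnd, ha, if_true] using hM.2.1 a ha
  · have ha2 : a ∈ P.A2 := by
      have : a ∈ P.A1 ∪ P.A2 := P.union_eq ▸ mem_univ a
      simpa [ha] using this
    simpa only [fEnd, sEnd, ha, if_false] using hM.2.2.1 a ha2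

theorem EdgeJoins.symm {a : A} {p q : I} (h : P.EdgeJoins a p q) : P.EdgeJoins a q p :=
  Or.symm h

theorem EdgeJoins.eq_or_swap {a : A} {p q p' q' : I} (h : P.EdgeJoins a p q)
    (h' : P.EdgeJoins a p' q') : (p = p' ∧ q = q') ∨ (p = q' ∧ q = p') := by
  unfold EdgeJoins at h h'
  grind

instance : Std.Symm P.Adj where
  symm _ _ := fun ⟨a, h⟩ => ⟨a, h.symm⟩

variable (P) in
def AdjWithout (b : A) (p q : I) : Prop := ∃ a, a ≠ b ∧ P.EdgeJoins a p q

instance (b : A) : Std.Symm (P.AdjWithout b) where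
  symm _ _ := fun ⟨a, hab, h⟩ => ⟨a, hab, h.symm⟩

theorem AdjWithout.adj {b : A} {p q : I} (h : P.AdjWithout b p q) : P.Adj p q :=
  let ⟨a, _, h⟩ := h
  ⟨a, h⟩

section Cycle

variable {ℓ : ℕ} {u : ℕ → I} {c : ℕ → A}

theorem IsCycle.pos (hc : P.IsCycle ℓ u c) : 0 < ℓ :=
  zero_lt_two.trans_le hc.1

theorem IsCycle.edge_inj (hc : P.IsCycle ℓ u c) {i j : ℕ} (hi : i < ℓ) (hj : j < ℓ)
    (h : c i = c j) : i = j :=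
  hc.2.2.1 i j hi hj h

theorem IsCycle.edgeJoins (hc : P.IsCycle ℓ u c) {i : ℕ} (hi : i < ℓ) :
    P.EdgeJoins (c i) (u i) (u ((i + 1) % ℓ)) :=
  hc.2.2.2 i hi

theorem IsCycle.edgeJoins_mod (hc : P.IsCycle ℓ u c) (i : ℕ) :
    P.EdgeJoins (c (i % ℓ)) (u (i % ℓ)) (u ((i + 1) % ℓ)) := by
  rw [← Nat.mod_add_mod]
  exact hc.edgeJoins (Nat.mod_lt i hc.pos)

theorem IsCycle.reflTransGen_adjWithout (hc : P.IsCycle ℓ u c) {b : A} {n m : ℕ} (hnm : n ≤ m)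
    (hb : ∀ i ∈ Set.Ico n m, c (i % ℓ) ≠ b) :
    ReflTransGen (P.AdjWithout b) (u (n % ℓ)) (u (m % ℓ)) :=
  ReflTransGen.lift (fun i => u (i % ℓ))
    (fun i _ ⟨hj, hi⟩ => hj ▸ ⟨c (i % ℓ), hb i hi, hc.edgeJoins_mod i⟩) _ _ <|
    reflTransGen_of_succ_of_le (fun i j => j = i + 1 ∧ i ∈ Set.Ico n m)
      (fun i hi => ⟨Order.succ_eq_add_one i, hi⟩) hnm

theorem IsCycle.reflTransGen_adj (hc : P.IsCycle ℓ u c) {i : ℕ} (hi : i < ℓ) :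
    ReflTransGen P.Adj (u 0) (u i) := by
  have h := hc.reflTransGen_adjWithout (b := c i) (Nat.zero_le i) fun j ⟨_, hj⟩ hji => by
    rw [Nat.mod_eq_of_lt (hj.trans hi)] at hji
    exact hj.ne (hc.edge_inj (hj.trans hi) hi hji)
  rw [Nat.zero_mod, Nat.mod_eq_of_lt hi] at h
  exact ReflTransGen.mono (fun _ _ => AdjWithout.adj) _ _ h

theorem IsCycle.reflTransGen_adjWithout_of_reflTransGen (hc : P.IsCycle ℓ u c) {i₀ : ℕ}
    (hi₀ : i₀ < ℓ) {p q : I} (h : ReflTransGen P.Adj p q) :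
    ReflTransGen (P.AdjWithout (c i₀)) p q := by
  have around : ReflTransGen (P.AdjWithout (c i₀)) (u ((i₀ + 1) % ℓ)) (u i₀) := by
    have h := hc.reflTransGen_adjWithout (b := c i₀) (n := i₀ + 1) (m := i₀ + ℓ) (by omega)
      fun i ⟨hi1, hi2⟩ hci => by
        have hmod := hc.edge_inj (Nat.mod_lt i hc.pos) hi₀ hci
        rcases lt_or_ge i ℓ with hiℓ | hiℓ
        · rw [Nat.mod_eq_of_lt hiℓ] at hmod
          omega
        · rw [Nat.mod_eq_sub_mod hiℓ, Nat.mod_eq_of_lt (by omega)] at hmod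
          omega
    rwa [Nat.add_mod_right, Nat.mod_eq_of_lt hi₀] at h
  refine ReflTransGen.lift' id (fun p q ⟨a, hpq⟩ => ?_) _ _ h
  by_cases ha : a = c i₀
  · subst ha
    rcases hpq.eq_or_swap (hc.edgeJoins hi₀) with ⟨rfl, rfl⟩ | ⟨rfl, rfl⟩
    · exact Std.Symm.symm _ _ around
    · exact around
  · exact .single ⟨a, ha, hpq⟩

end Cycle

section Counting

variable (P) in
def edgesIn (R : Finset I) : Finset A :=
  univ.filter fun a => P.fEnd a ∈ R ∧ P.sEnd a ∈ R

theorem EdgeJoins.mem_edgesIn {R : Finset I} {a : A} {p q : I} (h : P.EdgeJoins a p q)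
    (hp : p ∈ R) (hq : q ∈ R) : a ∈ P.edgesIn R := by
  rcases h with ⟨rfl, rfl⟩ | ⟨rfl, rfl⟩ <;> simp [edgesIn, *]

theorem IsWellFormed.card_edgesIn_le {M : A → I} (hM : P.IsWellFormed M) (R : Finset I) :
    #(P.edgesIn R) ≤ #R :=
  card_le_card_of_injOn M
    (fun a ha => by
      simp only [edgesIn, coe_filter, mem_univ, true_and, Set.mem_ofPred_eq] at ha
      rcases hM.eq_fEnd_or_eq_sEnd a with h | h <;> simp [h, ha.1, ha.2])
    hM.1.injOn

variable {ℓ : ℕ} {u : ℕ → I} {c : ℕ → A} {b : A}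

variable (P ℓ u c b) in
def IsParentEdge (p : I) (a : A) : Prop :=
  a ≠ b ∧ ∃ q, P.EdgeJoins a p q ∧
    ((∃ i < ℓ, p = u i ∧ q = u ((i + 1) % ℓ) ∧ a = c i) ∨
      distTo (P.AdjWithout b) (· ∈ u '' Set.Iio ℓ) q <
        distTo (P.AdjWithout b) (· ∈ u '' Set.Iio ℓ) p)

theorem exists_isParentEdge (hc : P.IsCycle ℓ u c) (hb : ∀ i < ℓ, c i ≠ b) {p : I}
    (hp : ∃ n, ReachesIn (P.AdjWithout b) (· ∈ u '' Set.Iio ℓ) n p) :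
    ∃ a, P.IsParentEdge ℓ u c b p a := by
  by_cases hpC : p ∈ u '' Set.Iio ℓ
  · obtain ⟨i, hi, rfl⟩ := hpC
    exact ⟨c i, hb i hi, _, hc.edgeJoins hi, .inl ⟨i, hi, rfl, rfl, rfl⟩⟩
  · obtain ⟨q, ⟨a, hab, hpq⟩, hlt⟩ := exists_rel_distTo_lt hp hpC
    exact ⟨a, hab, q, hpq, .inr hlt⟩

theorem IsParentEdge.inj (hc : P.IsCycle ℓ u c) {p p' : I} {a : A}
    (h : P.IsParentEdge ℓ u c b p a) (h' : P.IsParentEdge ℓ u c b p' a) : p = p' := by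
  obtain ⟨-, q, hpq, hp⟩ := h
  obtain ⟨-, q', hpq', hp'⟩ := h'
  rcases hpq.eq_or_swap hpq' with ⟨hpp', -⟩ | ⟨rfl, rfl⟩
  · exact hpp'
  have hdist : ∀ i, distTo (P.AdjWithout b) (· ∈ u '' Set.Iio ℓ) (u ((i + 1) % ℓ)) = 0 :=
    fun i => distTo_eq_zero ⟨_, Nat.mod_lt _ hc.pos, rfl⟩
  rcases hp with ⟨i, hi, rfl, rfl, rfl⟩ | hlt <;> rcases hp' with ⟨i', hi', hq', hp', hci⟩ | hlt'
  · rw [hq', hc.edge_inj hi' hi hci.symm]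
  · rw [hdist i] at hlt'
    omega
  · rw [hp', hdist i'] at hlt
    omega
  · omega

theorem card_lt_card_edgesIn {R : Finset I} (hR : ∀ p q, P.Adj p q → p ∈ R → q ∈ R)
    (hc : P.IsCycle ℓ u c) (hb : ∀ i < ℓ, c i ≠ b) (hbR : b ∈ P.edgesIn R)
    (hreach : ∀ p ∈ R, ∃ n, ReachesIn (P.AdjWithout b) (· ∈ u '' Set.Iio ℓ) n p) :
    #R < #(P.edgesIn R) := by
  have : Nonempty A := ⟨b⟩
  choose! φ hφ using fun p hp => exists_isParentEdge hc hb (hreach p hp)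
  have hmaps : Set.MapsTo φ R ((P.edgesIn R).erase b) := fun p hp => by
    obtain ⟨hne, q, hpq, -⟩ := hφ p hp
    exact mem_erase.2 ⟨hne, hpq.mem_edgesIn hp (hR p q ⟨_, hpq⟩ hp)⟩
  have hle := card_le_card_of_injOn φ hmaps fun p hp p' hp' h =>
    (hφ p hp).inj hc (h ▸ hφ p' hp')
  rw [card_erase_of_mem hbR] at hle
  have := card_pos.2 ⟨b, hbR⟩
  omega

end Counting

theorem not_isWellFormed_of_cycle_edge_not_mem {ℓ ℓ' : ℕ} {u u' : ℕ → I} {c c' : ℕ → A}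
    (hc : P.IsCycle ℓ u c) (hc' : P.IsCycle ℓ' u' c') {i₀ : ℕ} (hi₀ : i₀ < ℓ')
    (hb : ∀ i < ℓ, c i ≠ c' i₀) (hreach : ReflTransGen P.Adj (u 0) (u' 0)) (M : A → I) :
    ¬ P.IsWellFormed M := by
  intro hM
  set R : Finset I := univ.filter fun p => ReflTransGen P.Adj p (u 0)
  have hR : ∀ p q, P.Adj p q → p ∈ R → q ∈ R := by
    simp only [R, mem_filter, mem_univ, true_and]
    exact fun p q hpq hp => hp.head (Std.Symm.symm _ _ hpq)
  have hu'R : ∀ j < ℓ', u' j ∈ R := fun j hj => by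
    simpa [R] using Std.Symm.symm _ _ (hreach.trans (hc'.reflTransGen_adj hj))
  have hbR : c' i₀ ∈ P.edgesIn R :=
    (hc'.edgeJoins hi₀).mem_edgesIn (hu'R _ hi₀) (hu'R _ (Nat.mod_lt _ hc'.pos))
  have hreachC : ∀ p ∈ R, ∃ n, ReachesIn (P.AdjWithout (c' i₀)) (· ∈ u '' Set.Iio ℓ) n p :=
    fun p hp => ReachesIn.exists_of_reflTransGen
      (hc'.reflTransGen_adjWithout_of_reflTransGen hi₀ (by simpa [R] using hp)) ⟨0, hc.pos, rfl⟩
  exact (card_lt_card_edgesIn hR hc hb hbR hreachC).not_ge (hM.card_edgesIn_le R)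

end TwoWPM

/-- If the fs-relation graph contains a bad subgraph of type `G3`
(two distinct cycles in one connected component), then the instance has no
well-formed matching. -/
theorem no_well_formed_of_badG3
    {A I : Type} [Fintype A] [DecidableEq A] [Fintype I] [DecidableEq I]
    (P : TwoWPM A I) (h : P.HasBadG3) :
    ¬ P.HasWellFormed := by
  obtain ⟨ℓ, u, c, ℓ', u', c', hc, hc', hne, hreach⟩ := h
  rintro ⟨M, hM⟩
  by_cases hsub : {a : A | ∃ i, i < ℓ' ∧ c' i = a} ⊆ {a : A | ∃ i, i < ℓ ∧ c i = a}
  · obtain ⟨_, ⟨i₀, hi₀, rfl⟩, hb⟩ := Set.exists_of_ssubset (hsub.ssubset_of_ne hne.symm)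
    exact P.not_isWellFormed_of_cycle_edge_not_mem hc' hc hi₀ (fun i hi h => hb ⟨i, hi, h⟩)
      (Std.Symm.symm _ _ hreach) M hM
  · obtain ⟨_, ⟨i₀, hi₀, rfl⟩, hb⟩ := Set.not_subset.1 hsub
    exact P.not_isWellFormed_of_cycle_edge_not_mem hc hc' hi₀ (fun i hi h => hb ⟨i, hi, h⟩)
      hreach M hM
end
end

section
/- Suppose n/m → 0 as n → ∞ (with m = m(n) > n). Then for any choice of partition sizes n1(n) + n2(n) = n, the probability that the random fs-relation graph on parameters (n1, n2, m) contains a cycle (a closed walk using ℓ ≥ 2 distinct edges and ℓ distinct vertices) tends to 0 as n → ∞. -/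
open scoped Classical
open Finset

noncomputable section

/-- The sample space of the random fs-relation graph model with `n1` applicants of the
first category, `n2` applicants of the second category, and `m` items: an outcome
records the `f1`-, `s1`-, `f2`- and `s2`-items assigned to the applicants. -/
abbrev FSSpace (n1 n2 m : ℕ) : Type :=
  (Fin n1 → Fin m) × (Fin n1 → Fin m) × (Fin n2 → Fin m) × (Fin n2 → Fin m)

/-- the `f1`-items of an outcome. -/
def fOne {n1 n2 m : ℕ} (ω : FSSpace n1 n2 m) : Fin n1 → Fin m := ω.1
/-- the `s1`-items of an outcome. -/
def sOne {n1 n2 m : ℕ} (ω : FSSpace n1 n2 m) : Fin n1 → Fin m := ω.2.1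
/-- the `f2`-items of an outcome. -/
def fTwo {n1 n2 m : ℕ} (ω : FSSpace n1 n2 m) : Fin n2 → Fin m := ω.2.2.1
/-- the `s2`-items of an outcome. -/
def sTwo {n1 n2 m : ℕ} (ω : FSSpace n1 n2 m) : Fin n2 → Fin m := ω.2.2.2

/-- the set `F1` of an outcome. -/
def FOne {n1 n2 m : ℕ} (ω : FSSpace n1 n2 m) : Finset (Fin m) := Finset.univ.image (fOne ω)
/-- the set `F2` of an outcome. -/
def FTwo {n1 n2 m : ℕ} (ω : FSSpace n1 n2 m) : Finset (Fin m) := Finset.univ.image (fTwo ω)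

/-- an outcome is valid if each `s1`- and `f2`-item avoids `F1` and each `s2`-item
avoids `F1 ∪ F2`, as in the sequential random process. -/
def FSValid {n1 n2 m : ℕ} (ω : FSSpace n1 n2 m) : Prop :=
  (∀ x, sOne ω x ∉ FOne ω) ∧ (∀ y, fTwo ω y ∉ FOne ω) ∧
    (∀ y, sTwo ω y ∉ FOne ω ∪ FTwo ω)

/-- the probability of a single outcome under the sequential random process:
the `f1`-items are independent and uniform on the `m` items, then the `s1`- and
`f2`-items are independent and uniform on the items outside `F1`, then the
`s2`-items are independent and uniform on the items outside `F1 ∪ F2`. -/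
def fsWeight (n1 n2 m : ℕ) (ω : FSSpace n1 n2 m) : ℝ :=
  if FSValid ω then
    (1 / (m : ℝ)) ^ n1 * (1 / ((m : ℝ) - (FOne ω).card)) ^ (n1 + n2) *
      (1 / ((m : ℝ) - ((FOne ω) ∪ (FTwo ω)).card)) ^ n2
  else 0

/-- the probability of an event in the random fs-relation graph model. -/
def fsProb (n1 n2 m : ℕ) (S : FSSpace n1 n2 m → Prop) : ℝ :=
  ∑ ω : FSSpace n1 n2 m, if S ω then fsWeight n1 n2 m ω else 0

/-- the expectation of a random variable in the random fs-relation graph model. -/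
def fsExp (n1 n2 m : ℕ) (f : FSSpace n1 n2 m → ℝ) : ℝ :=
  ∑ ω : FSSpace n1 n2 m, fsWeight n1 n2 m ω * f ω

/-- the index set `T` of tuples `(x1, x2, y1, y2)` with `x1 < x2` and `y1 ≠ y2`. -/
def Ttup (n1 n2 : ℕ) : Finset (Fin n1 × Fin n1 × Fin n2 × Fin n2) :=
  Finset.univ.filter fun v => v.1 < v.2.1 ∧ v.2.2.1 ≠ v.2.2.2

/-- the event `{Z_v = 1}`, i.e. `f1(x1) = f1(x2)`, `f2(y1) = s1(x1)`, `f2(y2) = s1(x2)`. -/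
def ZEvent {n1 n2 m : ℕ} (v : Fin n1 × Fin n1 × Fin n2 × Fin n2)
    (ω : FSSpace n1 n2 m) : Prop :=
  fOne ω v.1 = fOne ω v.2.1 ∧ fTwo ω v.2.2.1 = sOne ω v.1 ∧
    fTwo ω v.2.2.2 = sOne ω v.2.1

/-- the indicator random variable `Z_v`. -/
def Zind {n1 n2 m : ℕ} (v : Fin n1 × Fin n1 × Fin n2 × Fin n2)
    (ω : FSSpace n1 n2 m) : ℝ :=
  if ZEvent v ω then 1 else 0

/-- the random variable `Z = ∑_{v ∈ T} Z_v`. -/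
def Ztotal (n1 n2 m : ℕ) (ω : FSSpace n1 n2 m) : ℝ :=
  ∑ v ∈ Ttup n1 n2, Zind v ω

/-- `T_h(v)`: the tuples `w ∈ T \ {v}` that are `h`-common to `v`,
i.e. `|{x1, x2} ∩ {x1', x2'}| = h`. -/
def Tcommon (n1 n2 : ℕ) (h : ℕ) (v : Fin n1 × Fin n1 × Fin n2 × Fin n2) :
    Finset (Fin n1 × Fin n1 × Fin n2 × Fin n2) :=
  (Ttup n1 n2).filter fun w =>
    w ≠ v ∧ (({v.1, v.2.1} : Finset (Fin n1)) ∩ ({w.1, w.2.1} : Finset (Fin n1))).card = h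

/-- the edge of applicant `a` (first or second category) joins items `p` and `q`
in the fs-relation graph of the outcome `ω`. -/
def fsJoins {n1 n2 m : ℕ} (ω : FSSpace n1 n2 m) (a : Fin n1 ⊕ Fin n2)
    (p q : Fin m) : Prop :=
  Sum.elim (fun x => (fOne ω x = p ∧ sOne ω x = q) ∨ (fOne ω x = q ∧ sOne ω x = p))
    (fun y => (fTwo ω y = p ∧ sTwo ω y = q) ∨ (fTwo ω y = q ∧ sTwo ω y = p)) a

/-- the fs-relation graph of the outcome contains a cycle: a closed walk on `ℓ ≥ 2`
distinct vertices using `ℓ` distinct edges. -/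
def fsHasCycle {n1 n2 m : ℕ} (ω : FSSpace n1 n2 m) : Prop :=
  ∃ (ℓ : ℕ) (u : ℕ → Fin m) (c : ℕ → Fin n1 ⊕ Fin n2),
    2 ≤ ℓ ∧
    (∀ i j, i < ℓ → j < ℓ → u i = u j → i = j) ∧
    (∀ i j, i < ℓ → j < ℓ → c i = c j → i = j) ∧
    (∀ i, i < ℓ → fsJoins ω (c i) (u i) (u ((i + 1) % ℓ)))

/-- the fs-relation graph of the outcome contains a simple path with `ℓ ≥ 4`
distinct edges and `ℓ + 1` distinct vertices. -/
def fsHasLongPath {n1 n2 m : ℕ} (ω : FSSpace n1 n2 m) : Prop :=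
  ∃ (ℓ : ℕ) (v : ℕ → Fin m) (e : ℕ → Fin n1 ⊕ Fin n2),
    4 ≤ ℓ ∧
    (∀ i j, i ≤ ℓ → j ≤ ℓ → v i = v j → i = j) ∧
    (∀ i j, i < ℓ → j < ℓ → e i = e j → i = j) ∧
    (∀ i, i < ℓ → fsJoins ω (e i) (v i) (v (i + 1)))
/-!
A cycle of length `ℓ` is described by its `ℓ` vertices and its `ℓ` distinct applicants, so with
`n = n1 + n2` there are at most `(m n)^ℓ` descriptions. Given the earlier choices, each item of the
sequential process is uniform on at least `m - n` items, so `ℓ` prescribed applicants land on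
prescribed pairs of items with probability at most `(2 / (m - n))^(2ℓ)`. Hence a cycle appears
with probability at most `∑_{ℓ ≥ 2} r^ℓ ≤ r^2 / (1 - r)` for `r = 4 n m / (m - n)^2`, and `r → 0`
when `n / m → 0`.
-/

open Filter Topology

lemma Finset.cast_card_le_fin {m : ℕ} (s : Finset (Fin m)) : (s.card : ℝ) ≤ m := by
  exact_mod_cast (card_le_univ s).trans_eq (Fintype.card_fin m)

lemma Finset.sum_mul_le_mul_of_le {ι : Type*} [Fintype ι] {a g : ι → ℝ} {A G : ℝ}
    (ha : ∀ i, 0 ≤ a i) (hA : ∑ i, a i ≤ A) (hg : ∀ i, g i ≤ G) (hG : 0 ≤ G) :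
    ∑ i, a i * g i ≤ A * G :=
  calc ∑ i, a i * g i ≤ ∑ i, a i * G :=
        sum_le_sum fun i _ => mul_le_mul_of_nonneg_left (hg i) (ha i)
    _ = (∑ i, a i) * G := (sum_mul _ _ _).symm
    _ ≤ A * G := mul_le_mul_of_nonneg_right hA hG

section Probability

variable {n1 n2 m : ℕ}

lemma fsWeight_nonneg (ω : FSSpace n1 n2 m) : 0 ≤ fsWeight n1 n2 m ω := by
  have hF1 := sub_nonneg.2 (FOne ω).cast_card_le_fin
  have hF12 := sub_nonneg.2 (FOne ω ∪ FTwo ω).cast_card_le_fin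
  unfold fsWeight
  split_ifs
  · exact mul_nonneg (mul_nonneg (by positivity) (pow_nonneg (one_div_nonneg.2 hF1) _))
      (pow_nonneg (one_div_nonneg.2 hF12) _)
  · exact le_rfl

lemma fsProb_nonneg (S : FSSpace n1 n2 m → Prop) : 0 ≤ fsProb n1 n2 m S :=
  sum_nonneg fun ω _ => ite_nonneg (fsWeight_nonneg ω) le_rfl

lemma fsProb_mono {S T : FSSpace n1 n2 m → Prop} (h : ∀ ω, S ω → T ω) :
    fsProb n1 n2 m S ≤ fsProb n1 n2 m T := by
  refine sum_le_sum fun ω _ => ?_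
  by_cases hS : S ω
  · rw [if_pos hS, if_pos (h ω hS)]
  · rw [if_neg hS]
    exact ite_nonneg (fsWeight_nonneg ω) le_rfl

lemma fsProb_exists_le_sum {ι : Type*} (s : Finset ι) (E : ι → FSSpace n1 n2 m → Prop) :
    fsProb n1 n2 m (fun ω => ∃ i ∈ s, E i ω) ≤ ∑ i ∈ s, fsProb n1 n2 m (E i) := by
  unfold fsProb
  rw [sum_comm]
  refine sum_le_sum fun ω _ => ?_
  split_ifs with h
  · obtain ⟨i, hi, hE⟩ := h
    calc fsWeight n1 n2 m ω = if E i ω then fsWeight n1 n2 m ω else 0 := (if_pos hE).symm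
      _ ≤ _ := single_le_sum (f := fun j => if E j ω then fsWeight n1 n2 m ω else 0)
          (fun j _ => ite_nonneg (fsWeight_nonneg ω) le_rfl) hi
  · exact sum_nonneg fun j _ => ite_nonneg (fsWeight_nonneg ω) le_rfl

end Probability

section Stage

variable {k m : ℕ}

/-- The weight of `g` when the `g i` are drawn independently and uniformly from the items
outside `F`, restricted to the box `∀ i, g i ∈ S i`. -/
def stageWeight (F : Finset (Fin m)) (S : Fin k → Finset (Fin m)) (g : Fin k → Fin m) : ℝ :=
  if ∀ i, g i ∈ S i \ F then (1 / ((m : ℝ) - F.card)) ^ k else 0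

lemma stageWeight_nonneg (F : Finset (Fin m)) (S : Fin k → Finset (Fin m))
    (g : Fin k → Fin m) : 0 ≤ stageWeight F S g :=
  ite_nonneg (pow_nonneg (one_div_nonneg.2 (sub_nonneg.2 F.cast_card_le_fin)) _) le_rfl

lemma sum_stageWeight_le {N : ℕ} (hN : N < m) {F : Finset (Fin m)} (hF : F.card ≤ N)
    (S : Fin k → Finset (Fin m)) :
    ∑ g, stageWeight F S g ≤ ∏ i, min 1 ((S i).card / ((m : ℝ) - N)) := by
  have hNF : (m : ℝ) - N ≤ m - F.card := by gcongr
  have hμ : (0 : ℝ) < m - N := sub_pos.2 (by exact_mod_cast hN)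
  have hsum : ∑ g, stageWeight F S g = ∏ i, ((S i \ F).card / ((m : ℝ) - F.card)) := by
    simp_rw [stageWeight, ← Fintype.mem_piFinset (t := fun i => S i \ F)]
    rw [sum_ite_mem, univ_inter, sum_const, Fintype.card_piFinset, nsmul_eq_mul]
    simp [div_eq_mul_inv, prod_mul_distrib]
  rw [hsum]
  refine prod_le_prod (fun i _ => div_nonneg (Nat.cast_nonneg _) (hμ.trans_le hNF).le)
    fun i _ => le_min ?_ ?_
  · rw [div_le_one (hμ.trans_le hNF), le_sub_iff_add_le]
    exact_mod_cast
      (card_sdiff_add_card (S i) F).trans_le ((card_le_univ _).trans_eq (by simp))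
  · exact div_le_div₀ (Nat.cast_nonneg _) (by exact_mod_cast card_le_card sdiff_subset) hμ hNF

end Stage

section Box

variable {n1 n2 m : ℕ}

def fsInBox (A B : Fin n1 → Finset (Fin m)) (C D : Fin n2 → Finset (Fin m))
    (ω : FSSpace n1 n2 m) : Prop :=
  (∀ x, fOne ω x ∈ A x ∧ sOne ω x ∈ B x) ∧ (∀ y, fTwo ω y ∈ C y ∧ sTwo ω y ∈ D y)

lemma ite_fsInBox_fsWeight (A B : Fin n1 → Finset (Fin m)) (C D : Fin n2 → Finset (Fin m))
    (f1 s1 : Fin n1 → Fin m) (f2 s2 : Fin n2 → Fin m) :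
    (if fsInBox A B C D (f1, s1, f2, s2) then fsWeight n1 n2 m (f1, s1, f2, s2) else 0) =
      stageWeight ∅ A f1 * (stageWeight (univ.image f1) B s1 *
        (stageWeight (univ.image f1) C f2 *
          stageWeight (univ.image f1 ∪ univ.image f2) D s2)) := by
  simp only [fsWeight, stageWeight, ite_zero_mul_ite_zero, ← ite_and]
  refine if_congr ?_ ?_ rfl
  · simp only [fsInBox, FSValid, FOne, FTwo, fOne, sOne, fTwo, sTwo]
    grind
  · simp only [FOne, FTwo, fOne, fTwo, card_empty, Nat.cast_zero, sub_zero, pow_add]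
    ring

lemma fsProb_fsInBox_le (hn : n1 + n2 < m) (A B : Fin n1 → Finset (Fin m))
    (C D : Fin n2 → Finset (Fin m)) :
    fsProb n1 n2 m (fsInBox A B C D) ≤
      (∏ x, min 1 ((A x).card / ((m : ℝ) - ↑(n1 + n2)))) *
        ((∏ x, min 1 ((B x).card / ((m : ℝ) - ↑(n1 + n2)))) *
          ((∏ y, min 1 ((C y).card / ((m : ℝ) - ↑(n1 + n2)))) *
            ∏ y, min 1 ((D y).card / ((m : ℝ) - ↑(n1 + n2))))) := by
  have hμ : (0 : ℝ) < m - ↑(n1 + n2) := sub_pos.2 (by exact_mod_cast hn)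
  have hprod : ∀ {k} (S : Fin k → Finset (Fin m)),
      0 ≤ ∏ i, min 1 ((S i).card / ((m : ℝ) - ↑(n1 + n2))) := fun S =>
    prod_nonneg fun i _ => le_min zero_le_one (by positivity)
  have hF1 : ∀ f1 : Fin n1 → Fin m, (univ.image f1).card ≤ n1 + n2 := fun f1 =>
    card_image_le.trans (by simp)
  have hF12 : ∀ (f1 : Fin n1 → Fin m) (f2 : Fin n2 → Fin m),
      (univ.image f1 ∪ univ.image f2).card ≤ n1 + n2 := fun f1 f2 =>
    (card_union_le _ _).trans (add_le_add (card_image_le.trans (by simp))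
      (card_image_le.trans (by simp)))
  simp only [fsProb, Fintype.sum_prod_type, ite_fsInBox_fsWeight, ← mul_sum]
  refine sum_mul_le_mul_of_le (stageWeight_nonneg _ _) (sum_stageWeight_le hn (by simp) A)
    (fun f1 => ?_) (mul_nonneg (hprod _) (mul_nonneg (hprod _) (hprod _)))
  refine sum_mul_le_mul_of_le (stageWeight_nonneg _ _) (sum_stageWeight_le hn (hF1 f1) B)
    (fun s1 => ?_) (mul_nonneg (hprod _) (hprod _))
  exact sum_mul_le_mul_of_le (stageWeight_nonneg _ _) (sum_stageWeight_le hn (hF1 f1) C)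
    (fun f2 => sum_stageWeight_le hn (hF12 f1 f2) D) (hprod _)

end Box

section Cycle

variable {n1 n2 m : ℕ}

lemma fsProb_forall_fsJoins_le (hn : n1 + n2 < m) {ℓ : ℕ} (u v : Fin ℓ → Fin m)
    {c : Fin ℓ → Fin n1 ⊕ Fin n2} (hc : Function.Injective c) :
    fsProb n1 n2 m (fun ω => ∀ i, fsJoins ω (c i) (u i) (v i)) ≤
      ((2 / ((m : ℝ) - ↑(n1 + n2))) ^ 2) ^ ℓ := by
  set μ : ℝ := m - ↑(n1 + n2)
  have hμ : 0 < μ := sub_pos.2 (by exact_mod_cast hn)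
  -- the items applicant `a` may use: the two ends of its prescribed edge, if any
  let P : Fin n1 ⊕ Fin n2 → Finset (Fin m) := fun a =>
    univ.filter fun p => ∀ i, c i = a → p = u i ∨ p = v i
  let φ : Fin n1 ⊕ Fin n2 → ℝ := fun a => min 1 ((P a).card / μ) ^ 2
  have hφ0 : ∀ a, 0 ≤ φ a := fun a => by positivity
  have hφ1 : ∀ a, φ a ≤ 1 := fun a =>
    pow_le_one₀ (le_min zero_le_one (by positivity)) (min_le_left _ _)
  have hφc : ∀ i, φ (c i) ≤ (2 / μ) ^ 2 := by
    intro i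
    have hP : P (c i) ⊆ {u i, v i} := fun p hp => by simpa using (mem_filter.1 hp).2 i rfl
    have hcard : ((P (c i)).card : ℝ) ≤ 2 := by
      exact_mod_cast (card_le_card hP).trans card_le_two
    refine pow_le_pow_left₀ (le_min zero_le_one (by positivity)) ?_ 2
    exact (min_le_right _ _).trans (div_le_div_of_nonneg_right hcard hμ.le)
  have hbox : ∀ ω, (∀ i, fsJoins ω (c i) (u i) (v i)) →
      fsInBox (P ∘ .inl) (P ∘ .inl) (P ∘ .inr) (P ∘ .inr) ω := by
    intro ω hJ
    constructor
    · intro x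
      simp only [Function.comp, P, mem_filter, mem_univ, true_and]
      constructor <;> intro i hi <;> have hJi := hJ i <;>
        simp only [hi, fsJoins, Sum.elim_inl] at hJi <;> tauto
    · intro y
      simp only [Function.comp, P, mem_filter, mem_univ, true_and]
      constructor <;> intro i hi <;> have hJi := hJ i <;>
        simp only [hi, fsJoins, Sum.elim_inr] at hJi <;> tauto
  calc fsProb n1 n2 m (fun ω => ∀ i, fsJoins ω (c i) (u i) (v i))
      ≤ fsProb n1 n2 m (fsInBox (P ∘ .inl) (P ∘ .inl) (P ∘ .inr) (P ∘ .inr)) :=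
        fsProb_mono hbox
    _ ≤ ∏ a, φ a := by
        refine (fsProb_fsInBox_le hn _ _ _ _).trans_eq ?_
        simp only [Fintype.prod_sum_type, φ, pow_two, prod_mul_distrib, Function.comp]
        ring
    _ ≤ ∏ a ∈ univ.image c, φ a :=
        prod_le_prod_of_subset_of_le_one (subset_univ _) (fun a _ => hφ0 a)
          fun a _ _ => hφ1 a
    _ = ∏ i, φ (c i) := prod_image fun i _ j _ h => hc h
    _ ≤ ((2 / μ) ^ 2) ^ ℓ := by
        simpa using prod_le_prod (s := univ) (fun i _ => hφ0 (c i)) fun i _ => hφc i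

lemma fsProb_fsHasCycle_le (hn : n1 + n2 < m) :
    fsProb n1 n2 m fsHasCycle ≤ ∑ ℓ ∈ Ico 2 (n1 + n2 + 1),
      (4 * ↑(n1 + n2) * m / ((m : ℝ) - ↑(n1 + n2)) ^ 2) ^ ℓ := by
  set μ : ℝ := m - ↑(n1 + n2)
  let walks (ℓ : ℕ) : Finset ((Fin ℓ → Fin m) × (Fin ℓ → Fin n1 ⊕ Fin n2)) :=
    univ.filter fun w => Function.Injective w.2
  have hcycle : ∀ ω, fsHasCycle ω → ∃ ℓ ∈ Ico 2 (n1 + n2 + 1), ∃ w ∈ walks ℓ,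
      ∀ i : Fin ℓ, fsJoins ω (w.2 i) (w.1 i) (w.1 ⟨(i + 1) % ℓ, Nat.mod_lt _ i.pos⟩) := by
    rintro ω ⟨ℓ, u, c, hℓ, -, hc, hJ⟩
    have hinj : Function.Injective fun i : Fin ℓ => c i :=
      fun i j hij => Fin.ext (hc _ _ i.isLt j.isLt hij)
    have hℓn : ℓ ≤ n1 + n2 := by simpa using Fintype.card_le_of_injective _ hinj
    exact ⟨ℓ, mem_Ico.2 ⟨hℓ, Nat.lt_succ_of_le hℓn⟩, (fun i => u i, fun i => c i),
      mem_filter.2 ⟨mem_univ _, hinj⟩, fun i => hJ i i.isLt⟩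
  calc fsProb n1 n2 m fsHasCycle
      ≤ ∑ ℓ ∈ Ico 2 (n1 + n2 + 1), ∑ w ∈ walks ℓ, fsProb n1 n2 m fun ω =>
          ∀ i : Fin ℓ, fsJoins ω (w.2 i) (w.1 i) (w.1 ⟨(i + 1) % ℓ, Nat.mod_lt _ i.pos⟩) :=
        (fsProb_mono hcycle).trans <| (fsProb_exists_le_sum _ _).trans <|
          sum_le_sum fun ℓ _ => fsProb_exists_le_sum _ _
    _ ≤ ∑ ℓ ∈ Ico 2 (n1 + n2 + 1),
          ((m ^ ℓ * (n1 + n2) ^ ℓ : ℕ) : ℝ) * ((2 / μ) ^ 2) ^ ℓ := by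
        refine sum_le_sum fun ℓ _ => (sum_le_card_nsmul _ _ _ fun w hw =>
          fsProb_forall_fsJoins_le hn _ _ (mem_filter.1 hw).2).trans ?_
        rw [nsmul_eq_mul]
        gcongr
        exact (card_filter_le _ _).trans_eq (by simp)
    _ = ∑ ℓ ∈ Ico 2 (n1 + n2 + 1), (4 * ↑(n1 + n2) * m / μ ^ 2) ^ ℓ := by
        refine sum_congr rfl fun ℓ _ => ?_
        rw [Nat.cast_mul, Nat.cast_pow, Nat.cast_pow, ← mul_pow, ← mul_pow, div_pow]
        congr 1
        ring

end Cycle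

/-- **Lemma 3.** If `n/m(n) → 0` (with `m(n) > n`), then for any choice
of category sizes `n1(n) + n2(n) = n`, the probability that the random fs-relation
graph on parameters `(n1 n, n2 n, m n)` contains a cycle tends to `0`. -/
theorem random_fs_graph_cycle_prob_tendsto_zero
    (m : ℕ → ℕ) (hm : ∀ n : ℕ, n < m n)
    (hlim : Filter.Tendsto (fun n : ℕ => (n : ℝ) / (m n : ℝ)) Filter.atTop (nhds 0))
    (n1 n2 : ℕ → ℕ) (hpart : ∀ n : ℕ, n1 n + n2 n = n) :
    Filter.Tendsto (fun n : ℕ => fsProb (n1 n) (n2 n) (m n) fsHasCycle)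
      Filter.atTop (nhds 0) := by
  set t : ℕ → ℝ := fun n => (n : ℝ) / m n
  set r : ℕ → ℝ := fun n => 4 * t n / (1 - t n) ^ 2
  have hr : Tendsto r atTop (𝓝 0) := by
    simpa [Pi.div_def] using
      (hlim.const_mul 4).div (((tendsto_const_nhds (x := (1 : ℝ))).sub hlim).pow 2) (by norm_num)
  have hbound : ∀ n, r n < 1 →
      fsProb (n1 n) (n2 n) (m n) fsHasCycle ≤ r n ^ 2 / (1 - r n) := by
    intro n hrn
    have hmn : (n : ℝ) < m n := by exact_mod_cast hm n
    have hm0 : (m n : ℝ) ≠ 0 := ((Nat.cast_nonneg n).trans_lt hmn).ne'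
    have hr_eq : 4 * (n : ℝ) * m n / (m n - n) ^ 2 = r n := by
      simp only [r, t]
      field_simp
    have h := fsProb_fsHasCycle_le (n1 := n1 n) (n2 := n2 n) (hpart n ▸ hm n)
    rw [hpart n, hr_eq] at h
    exact h.trans (geom_sum_Ico_le_of_lt_one (by positivity) hrn)
  refine squeeze_zero' (Eventually.of_forall fun n => fsProb_nonneg _)
    ((hr.eventually (gt_mem_nhds one_pos)).mono hbound) ?_
  simpa [Pi.div_def] using
    (hr.pow 2).div ((tendsto_const_nhds (x := (1 : ℝ))).sub hr) (by norm_num)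
end
end

section
/- In the random fs-relation graph model, for every tuple v ∈ T one has 1/m³ ≤ Pr[Z_v = 1] ≤ 1/(m·(m - n1)²). In particular, if m - n ≥ m/c for a constant c > 1, then Pr[Z_v = 1] ≤ c²/m³. -/
open scoped Classical
open Finset

noncomputable section

/-! The weight of an outcome is a product of uniform densities: on all items for the
`f1`-items, on the complement of `F1` for the `s1`- and `f2`-items, and on the complement of
`F1 ∪ F2` for the `s2`-items. Summing out `s2`, then `f2` (pinned at `y1`, `y2` to `s1(x1)`,
`s1(x2)`), then `s1` gives `Pr[Z_v = 1] = E[1{f1(x1) = f1(x2)} / (m - |F1|)²]`. Since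
`Pr[f1(x1) = f1(x2)] = 1/m` and `m - n1 ≤ m - |F1| ≤ m`, both bounds follow. -/

section PiSums

variable {ι α R : Type*} [Fintype ι] [DecidableEq ι] [Fintype α] [DecidableEq α]
  [CommSemiring R]

lemma Finset.prod_ite_eq_ite_eq {i j : ι} (hij : i ≠ j) (a b s : R) :
    ∏ k, (if k = i then a else if k = j then b else s) = a * b * s ^ (Fintype.card ι - 2) := by
  have hj : j ∈ univ.erase i := mem_erase.2 ⟨hij.symm, mem_univ j⟩
  rw [← mul_prod_erase univ _ (mem_univ i), ← mul_prod_erase _ _ hj, if_pos rfl,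
    if_neg hij.symm, if_pos rfl, ← mul_assoc, prod_congr rfl fun k hk => ?_, prod_const,
    card_erase_of_mem hj, card_erase_of_mem (mem_univ i), card_univ, Nat.sub_sub]
  obtain ⟨hkj, hki⟩ : k ≠ j ∧ k ≠ i := by simpa using hk
  rw [if_neg hki, if_neg hkj]

lemma Fintype.sum_ite_apply_eq_prod {i j : ι} (hij : i ≠ j) (g : α → R) (p q : α) :
    ∑ c : ι → α, (if c i = p ∧ c j = q then ∏ k, g (c k) else 0) =
      g p * g q * (∑ z, g z) ^ (Fintype.card ι - 2) := by
  set h : ι → α → R := fun k z =>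
    if k = i then (if z = p then g z else 0) else if k = j then (if z = q then g z else 0) else g z
  have hpoint : ∀ c : ι → α,
      (if c i = p ∧ c j = q then ∏ k, g (c k) else 0) = ∏ k, h k (c k) := by
    intro c
    split_ifs with hc
    · refine Finset.prod_congr rfl fun k _ => ?_
      by_cases hki : k = i
      · subst hki; simp [h, hc.1]
      · by_cases hkj : k = j
        · subst hkj; simp [h, hki, hc.2]
        · simp [h, hki, hkj]
    · by_cases hci : c i = p
      · have hcj : c j ≠ q := fun e => hc ⟨hci, e⟩
        exact (Finset.prod_eq_zero (Finset.mem_univ j) (by simp [h, hij.symm, hcj])).symm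
      · exact (Finset.prod_eq_zero (Finset.mem_univ i) (by simp [h, hci])).symm
  have hsum : ∀ k, ∑ z, h k z = if k = i then g p else if k = j then g q else ∑ z, g z := by
    intro k
    simp only [h]
    split_ifs <;> simp
  rw [Fintype.sum_congr _ _ hpoint, ← Fintype.prod_sum, Fintype.prod_congr _ _ hsum,
    Finset.prod_ite_eq_ite_eq hij]

lemma Fintype.sum_ite_apply_eq_apply_prod {i j : ι} (hij : i ≠ j) (g : α → R) :
    ∑ c : ι → α, (if c i = c j then ∏ k, g (c k) else 0) =
      (∑ z, g z ^ 2) * (∑ z, g z) ^ (Fintype.card ι - 2) := by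
  have hpoint : ∀ c : ι → α, (if c i = c j then ∏ k, g (c k) else 0) =
      ∑ p, if c i = p ∧ c j = p then ∏ k, g (c k) else 0 := by
    intro c
    simp only [ite_and, Finset.sum_ite_eq, Finset.mem_univ, if_true]
    exact if_congr eq_comm rfl rfl
  rw [Fintype.sum_congr _ _ hpoint, Finset.sum_comm, Finset.sum_mul]
  simp only [sum_ite_apply_eq_prod hij, sq]

end PiSums

def unifCompl {α : Type*} [Fintype α] (A : Finset α) (z : α) : ℝ :=
  if z ∈ A then 0 else 1 / ((Fintype.card α : ℝ) - #A)

section UnifCompl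

variable {ι α : Type*} [Fintype ι] [Fintype α] (A : Finset α)

lemma unifCompl_nonneg (z : α) : 0 ≤ unifCompl A z := by
  unfold unifCompl
  split_ifs
  · exact le_rfl
  · exact one_div_nonneg.mpr (sub_nonneg.mpr (Nat.cast_le.mpr (card_le_univ A)))

lemma sum_unifCompl (hA : #A < Fintype.card α) : ∑ z, unifCompl A z = 1 := by
  have hpos : (0 : ℝ) < (Fintype.card α : ℝ) - #A := by
    rw [sub_pos]; exact_mod_cast hA
  simp only [unifCompl, Finset.sum_ite, Finset.sum_const_zero, Finset.sum_const, zero_add,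
    nsmul_eq_mul, Finset.filter_not, Finset.filter_mem_eq_inter, Finset.univ_inter,
    Finset.card_sdiff_of_subset (Finset.subset_univ A), Finset.card_univ,
    Nat.cast_sub hA.le]
  field_simp

lemma prod_unifCompl (c : ι → α) :
    ∏ k, unifCompl A (c k) =
      if ∀ k, c k ∉ A then (1 / ((Fintype.card α : ℝ) - #A)) ^ Fintype.card ι else 0 := by
  split_ifs with hc
  · simp [unifCompl, hc]
  · obtain ⟨k, hk⟩ := not_forall_not.mp hc
    exact Finset.prod_eq_zero (Finset.mem_univ k) (if_pos hk)

lemma prod_unifCompl_mul_apply (c : ι → α) (i : ι) :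
    (∏ k, unifCompl A (c k)) * unifCompl A (c i) =
      (∏ k, unifCompl A (c k)) * (1 / ((Fintype.card α : ℝ) - #A)) := by
  by_cases hi : c i ∈ A
  · have h0 : ∏ k, unifCompl A (c k) = 0 := Finset.prod_eq_zero (Finset.mem_univ i) (if_pos hi)
    rw [h0, zero_mul, zero_mul]
  · rw [unifCompl, if_neg hi]

end UnifCompl

lemma sum_ite_apply_eq_apply_prod_unifCompl_empty {ι α : Type*} [Fintype ι] [DecidableEq ι]
    [Fintype α] [DecidableEq α] [Nonempty α] {i j : ι} (hij : i ≠ j) :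
    ∑ c : ι → α, (if c i = c j then ∏ k, unifCompl ∅ (c k) else 0) =
      1 / Fintype.card α := by
  rw [Fintype.sum_ite_apply_eq_apply_prod hij, sum_unifCompl ∅ (by simpa using Fintype.card_pos),
    one_pow, mul_one]
  simp only [unifCompl, Finset.notMem_empty, if_false, card_empty, Nat.cast_zero, sub_zero,
    Finset.sum_const, card_univ, nsmul_eq_mul]
  have : (Fintype.card α : ℝ) ≠ 0 := by positivity
  field_simp

lemma fsWeight_eq_prod {n1 n2 m : ℕ} (ω : FSSpace n1 n2 m) :
    fsWeight n1 n2 m ω =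
      (∏ x, unifCompl ∅ (fOne ω x)) * (∏ x, unifCompl (FOne ω) (sOne ω x)) *
        (∏ y, unifCompl (FOne ω) (fTwo ω y)) *
          ∏ y, unifCompl (FOne ω ∪ FTwo ω) (sTwo ω y) := by
  simp only [prod_unifCompl, fsWeight, FSValid, Finset.notMem_empty, not_false_eq_true,
    implies_true, if_true, card_empty, Nat.cast_zero, sub_zero, Fintype.card_fin]
  by_cases hs : ∀ x, sOne ω x ∉ FOne ω <;> by_cases hf : ∀ y, fTwo ω y ∉ FOne ω <;>
    by_cases hd : ∀ y, sTwo ω y ∉ FOne ω ∪ FTwo ω <;> simp [hs, hf, hd, pow_add, mul_assoc]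

lemma fsProb_ZEvent_eq {n1 n2 m : ℕ} (hm : n1 + n2 < m) (v : Fin n1 × Fin n1 × Fin n2 × Fin n2)
    (hy : v.2.2.1 ≠ v.2.2.2) :
    fsProb n1 n2 m (ZEvent v) =
      ∑ a : Fin n1 → Fin m, (if a v.1 = a v.2.1 then ∏ x, unifCompl ∅ (a x) else 0) *
        (1 / ((m : ℝ) - #(univ.image a))) ^ 2 := by
  obtain ⟨x1, x2, y1, y2⟩ := v
  simp only [fsProb, Fintype.sum_prod_type, fsWeight_eq_prod, ZEvent, fOne, sOne, fTwo, sTwo,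
    FOne, FTwo]
  refine Finset.sum_congr rfl fun a _ => ?_
  set A := univ.image a
  have hAn : #A ≤ n1 := card_image_le.trans_eq (by simp)
  have hA : #A < Fintype.card (Fin m) := by simp only [Fintype.card_fin]; omega
  have hd : ∀ c : Fin n2 → Fin m,
      ∑ d : Fin n2 → Fin m, ∏ y, unifCompl (A ∪ univ.image c) (d y) = 1 := by
    intro c
    have hAc : #(A ∪ univ.image c) < Fintype.card (Fin m) := by
      have hCn : #(univ.image c) ≤ n2 := card_image_le.trans_eq (by simp)
      have := card_union_le A (univ.image c)
      simp only [Fintype.card_fin]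
      omega
    rw [← Fintype.sum_pow, sum_unifCompl _ hAc, one_pow]
  have hc : ∀ b : Fin n1 → Fin m, ∑ c : Fin n2 → Fin m,
      (if c y1 = b x1 ∧ c y2 = b x2 then ∏ y, unifCompl A (c y) else 0) =
        unifCompl A (b x1) * unifCompl A (b x2) := by
    intro b
    rw [Fintype.sum_ite_apply_eq_prod hy, sum_unifCompl A hA, one_pow, mul_one]
  have hb : ∑ b : Fin n1 → Fin m,
      (∏ x, unifCompl A (b x)) * (unifCompl A (b x1) * unifCompl A (b x2)) =
        (1 / ((m : ℝ) - #A)) ^ 2 := by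
    have hpoint : ∀ b : Fin n1 → Fin m,
        (∏ x, unifCompl A (b x)) * (unifCompl A (b x1) * unifCompl A (b x2)) =
          (∏ x, unifCompl A (b x)) * (1 / ((m : ℝ) - #A)) ^ 2 := by
      intro b
      rw [← mul_assoc, prod_unifCompl_mul_apply, mul_right_comm, prod_unifCompl_mul_apply,
        Fintype.card_fin, mul_assoc, sq]
    rw [Fintype.sum_congr _ _ hpoint, ← Finset.sum_mul, ← Fintype.sum_pow, sum_unifCompl A hA,
      one_pow, one_mul]
  by_cases hE : a x1 = a x2
  · simp only [hE, true_and, if_true]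
    have hsplit : ∀ (b : Fin n1 → Fin m) (c d : Fin n2 → Fin m),
        (if c y1 = b x1 ∧ c y2 = b x2 then
          (∏ x, unifCompl ∅ (a x)) * (∏ x, unifCompl A (b x)) * (∏ y, unifCompl A (c y)) *
            ∏ y, unifCompl (A ∪ univ.image c) (d y) else 0) =
        (∏ x, unifCompl ∅ (a x)) * ((∏ x, unifCompl A (b x)) *
          ((if c y1 = b x1 ∧ c y2 = b x2 then ∏ y, unifCompl A (c y) else 0) *
            ∏ y, unifCompl (A ∪ univ.image c) (d y))) := by
      intros
      split_ifs <;> ring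
    simp only [hsplit, ← Finset.mul_sum, hd, mul_one, hc, hb]
  · simp [hE]

lemma fsProb_ZEvent_mem_Icc {n1 n2 m : ℕ} (hm : n1 + n2 < m)
    {v : Fin n1 × Fin n1 × Fin n2 × Fin n2} (hv : v ∈ Ttup n1 n2) {lo hi : ℝ}
    (hlo : ∀ a : Fin n1 → Fin m, lo ≤ (1 / ((m : ℝ) - #(univ.image a))) ^ 2)
    (hhi : ∀ a : Fin n1 → Fin m, (1 / ((m : ℝ) - #(univ.image a))) ^ 2 ≤ hi) :
    fsProb n1 n2 m (ZEvent v) ∈ Set.Icc (lo / m) (hi / m) := by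
  obtain ⟨hx, hy⟩ : v.1 < v.2.1 ∧ v.2.2.1 ≠ v.2.2.2 := by simpa [Ttup] using hv
  have : NeZero m := ⟨by omega⟩
  have hdiag := sum_ite_apply_eq_apply_prod_unifCompl_empty (α := Fin m) hx.ne
  rw [Fintype.card_fin] at hdiag
  rw [fsProb_ZEvent_eq hm v hy]
  set w : (Fin n1 → Fin m) → ℝ :=
    fun a => if a v.1 = a v.2.1 then ∏ x, unifCompl ∅ (a x) else 0
  have hw : ∀ a, 0 ≤ w a := fun a => by
    simp only [w]
    split_ifs
    exacts [Finset.prod_nonneg fun x _ => unifCompl_nonneg _ _, le_rfl]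
  constructor
  · calc lo / m = ∑ a, w a * lo := by rw [← Finset.sum_mul, hdiag, one_div_mul_eq_div]
      _ ≤ _ := Finset.sum_le_sum fun a _ => mul_le_mul_of_nonneg_left (hlo a) (hw a)
  · calc _ ≤ ∑ a, w a * hi :=
          Finset.sum_le_sum fun a _ => mul_le_mul_of_nonneg_left (hhi a) (hw a)
      _ = hi / m := by rw [← Finset.sum_mul, hdiag, one_div_mul_eq_div]

/-- In the random fs-relation graph model, for every `v ∈ T`,
`1/m³ ≤ Pr[Z_v = 1] ≤ 1/(m (m - n1)²)`; and if moreover `m - n ≥ m/c` for a constant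
`c > 1`, then `Pr[Z_v = 1] ≤ c²/m³`. -/
theorem Zv_prob_bounds (n1 n2 m : ℕ) (hm : n1 + n2 < m)
    (v : Fin n1 × Fin n1 × Fin n2 × Fin n2) (hv : v ∈ Ttup n1 n2) :
    (1 / (m : ℝ) ^ 3 ≤ fsProb n1 n2 m (ZEvent v) ∧
      fsProb n1 n2 m (ZEvent v) ≤ 1 / ((m : ℝ) * ((m : ℝ) - (n1 : ℝ)) ^ 2)) ∧
    (∀ c : ℝ, 1 < c → (m : ℝ) / c ≤ (m : ℝ) - ((n1 + n2 : ℕ) : ℝ) →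
      fsProb n1 n2 m (ZEvent v) ≤ c ^ 2 / (m : ℝ) ^ 3) := by
  have hn1 : (0 : ℝ) < m - n1 := by rw [sub_pos]; exact_mod_cast (by omega : n1 < m)
  have hcard : ∀ a : Fin n1 → Fin m, (#(univ.image a) : ℝ) ≤ n1 := fun a => by
    exact_mod_cast card_image_le.trans_eq (by simp)
  obtain ⟨hlow, hup⟩ := Set.mem_Icc.mp <| fsProb_ZEvent_mem_Icc hm hv
    (lo := (1 / (m : ℝ)) ^ 2) (hi := (1 / ((m : ℝ) - n1)) ^ 2)
    (fun a => by have := hcard a; gcongr <;> [linarith; simp])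
    (fun a => pow_le_pow_left₀ (one_div_nonneg.2 (by linarith [hcard a]))
      (one_div_le_one_div_of_le hn1 (by linarith [hcard a])) 2)
  have hup' : fsProb n1 n2 m (ZEvent v) ≤ 1 / ((m : ℝ) * ((m : ℝ) - (n1 : ℝ)) ^ 2) :=
    hup.trans_eq (by field_simp)
  refine ⟨⟨le_of_eq_of_le (by field_simp) hlow, hup'⟩, fun c hc hcm => hup'.trans ?_⟩
  have hm0 : (0 : ℝ) < m := by linarith [(Nat.cast_nonneg n1 : (0 : ℝ) ≤ n1)]
  have hmc : (m : ℝ) ≤ c * (m - n1) := by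
    rw [div_le_iff₀ (by linarith)] at hcm
    push_cast at hcm
    nlinarith [(Nat.cast_nonneg n2 : (0 : ℝ) ≤ n2)]
  rw [div_le_div_iff₀ (by positivity) (by positivity)]
  nlinarith [mul_le_mul hmc hmc hm0.le (by positivity)]
end
end
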